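/- arXiv:1501.02086 — 6 statements merged into one kernel-verified Lean document; each statement's English description precedes it below -/
import Mathlib

section
/- For every integer p there exist real constants 0 < c₁ ≤ c₂ and a natural number N₀ such that for all natural numbers N ≥ N₀: c₁·N² ≤ ∑_{q ∈ ℤ⁴, q₁²+q₂²+q₃²+q₄² ≤ N²} 1/A_p(q) ≤ c₂·N². (The one-loop melonic two-point subgraph has divergence degree ω = 2: its partial sums grow quadratically in the momentum cutoff.) -/
open scoped BigOperators

open Finset Real in
private lemma oneD_bound (m : ℝ) (hm : 0 < m) (N : ℕ) :
    (∑ k ∈ Finset.Icc (-(N:ℤ)) N, (Real.sqrt (Real.sqrt ((k:ℝ)^2 + m^2)))⁻¹)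
      ≤ (Real.sqrt m)⁻¹ + 4 * Real.sqrt N := by
  induction N with
  | zero =>
      simp only [Nat.cast_zero, neg_zero, Finset.Icc_self, Finset.sum_singleton]
      rw [Int.cast_zero]
      rw [show (0:ℝ)^2 + m^2 = m^2 by ring, Real.sqrt_sq hm.le]
      have : (0:ℝ) ≤ Real.sqrt 0 := Real.sqrt_nonneg 0
      nlinarith [Real.sqrt_nonneg (0:ℝ), Real.sqrt_nonneg m]
  | succ N ih =>
      have hins : Finset.Icc (-((N:ℤ)+1)) ((N:ℤ)+1)
          = insert (-((N:ℤ)+1)) (insert ((N:ℤ)+1) (Finset.Icc (-(N:ℤ)) N)) := by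
        ext k; simp [Finset.mem_Icc]; omega
      have h1 : (-((N:ℤ)+1)) ∉ insert ((N:ℤ)+1) (Finset.Icc (-(N:ℤ)) N) := by
        simp [Finset.mem_Icc]; omega
      have h2 : ((N:ℤ)+1) ∉ Finset.Icc (-(N:ℤ)) N := by
        simp [Finset.mem_Icc]
      push_cast
      rw [hins, Finset.sum_insert h1, Finset.sum_insert h2]
      push_cast
      set b := Real.sqrt ((N:ℝ)+1) with hbdef
      have hb : 0 < b := Real.sqrt_pos.mpr (by positivity)
      have hb2 : b^2 = (N:ℝ)+1 := Real.sq_sqrt (by positivity)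
      have key : ∀ k : ℤ, (k:ℝ)^2 = ((N:ℝ)+1)^2 →
          (Real.sqrt (Real.sqrt ((k:ℝ)^2 + m^2)))⁻¹ ≤ b⁻¹ := by
        intro k hk
        have h3 : ((N:ℝ)+1) ≤ Real.sqrt ((k:ℝ)^2 + m^2) := by
          rw [Real.le_sqrt (by positivity) (by positivity), hk]
          nlinarith [sq_nonneg m]
        have h4 : b ≤ Real.sqrt (Real.sqrt ((k:ℝ)^2 + m^2)) := by
          rw [hbdef]
          exact Real.sqrt_le_sqrt h3
        exact inv_anti₀ hb h4
      have hk1 : ((-((N:ℝ)+1)))^2 = ((N:ℝ)+1)^2 := by ring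
      have e1 := key (-((N:ℤ)+1)) (by push_cast; ring)
      have e2 := key ((N:ℤ)+1) (by push_cast; ring)
      push_cast at e1 e2
      set a := Real.sqrt (N:ℝ) with hadef
      have ha : 0 ≤ a := Real.sqrt_nonneg _
      have ha2 : a^2 = (N:ℝ) := Real.sq_sqrt (by positivity)
      have hbi : b * b⁻¹ = 1 := mul_inv_cancel₀ hb.ne'
      have hi : 0 ≤ b⁻¹ := by positivity
      have hstep : 2 * b⁻¹ ≤ 4 * b - 4 * a := by
        have h5 : 4 * a * b ≤ 4 * b ^ 2 - 2 := by nlinarith [sq_nonneg (a - b)]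
        nlinarith [mul_nonneg (sub_nonneg.mpr h5) hi]
      linarith [ih]

/-- The gauge-constrained propagator denominator: `A m p q = |q⃗|² + m²` for a momentum
`q⃗ ∈ ℤ⁶` with one component fixed to `p`, four free components `q`, and the last component
`-(p + S q)` determined by the closure constraint. -/
noncomputable def A (m : ℝ) (p : ℤ) (q : Fin 4 → ℤ) : ℝ :=
  (p : ℝ) ^ 2 + (∑ i, ((q i : ℝ)) ^ 2) + ((p : ℝ) + ∑ i, (q i : ℝ)) ^ 2 + m ^ 2

private lemma A_pos (m : ℝ) (hm : 0 < m) (p : ℤ) (q : Fin 4 → ℤ) : 0 < A m p q := by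
  unfold A
  have : (0:ℝ) ≤ ∑ i, ((q i : ℝ))^2 := Finset.sum_nonneg fun i _ => sq_nonneg _
  nlinarith [sq_nonneg ((p:ℝ)), sq_nonneg ((p:ℝ) + ∑ i, (q i : ℝ))]

-- pointwise upper bound
private lemma pointwise_upper (m : ℝ) (hm : 0 < m) (p : ℤ) (q : Fin 4 → ℤ) :
    1 / A m p q ≤ ∏ i : Fin 4, (Real.sqrt (Real.sqrt ((q i : ℝ)^2 + m^2)))⁻¹ := by
  have hA : 0 < A m p q := A_pos m hm p q
  set a : Fin 4 → ℝ := fun i => (q i : ℝ)^2 + m^2 with hadef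
  have hai : ∀ i, 0 < a i := fun i => by positivity
  have haA : ∀ i, a i ≤ A m p q := by
    intro i
    show (q i : ℝ)^2 + m^2 ≤ A m p q
    unfold A
    have h : (q i : ℝ)^2 ≤ ∑ j, ((q j : ℝ))^2 :=
      Finset.single_le_sum (f := fun j => ((q j : ℝ))^2) (fun j _ => sq_nonneg _)
        (Finset.mem_univ i)
    nlinarith [sq_nonneg ((p:ℝ)), sq_nonneg ((p:ℝ) + ∑ i, (q i : ℝ))]
  set B : ℝ := ∏ i, Real.sqrt (Real.sqrt (a i)) with hBdef
  have hBpos : 0 < B := Finset.prod_pos fun i _ => Real.sqrt_pos.mpr (Real.sqrt_pos.mpr (hai i))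
  have hB4 : B^4 = ∏ i, a i := by
    rw [hBdef, ← Finset.prod_pow]
    refine Finset.prod_congr rfl fun i _ => ?_
    rw [show (4:ℕ) = 2*2 from rfl, pow_mul, Real.sq_sqrt (Real.sqrt_nonneg _),
      Real.sq_sqrt (hai i).le]
  have hprod_le : ∏ i, a i ≤ (A m p q)^4 := by
    rw [Fin.prod_univ_four]
    have h0 := haA 0; have h1 := haA 1; have h2 := haA 2; have h3 := haA 3
    have g0 := (hai 0).le; have g1 := (hai 1).le; have g2 := (hai 2).le; have g3 := (hai 3).le
    have hAn : (0:ℝ) ≤ A m p q := hA.le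
    have m01 : a 0 * a 1 ≤ A m p q * A m p q := mul_le_mul h0 h1 g1 hAn
    have m012 : a 0 * a 1 * a 2 ≤ A m p q * A m p q * A m p q :=
      mul_le_mul m01 h2 g2 (mul_nonneg hAn hAn)
    have m0123 : a 0 * a 1 * a 2 * a 3 ≤ A m p q * A m p q * A m p q * A m p q :=
      mul_le_mul m012 h3 g3 (by positivity)
    nlinarith [m0123]
  have hBA : B ≤ A m p q := by
    refine le_of_pow_le_pow_left₀ (n := 4) (by norm_num) hA.le ?_
    rw [hB4]; exact hprod_le
  have : 1 / A m p q ≤ 1 / B := one_div_le_one_div_of_le hBpos hBA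
  calc 1 / A m p q ≤ 1 / B := this
    _ = ∏ i, (Real.sqrt (Real.sqrt (a i)))⁻¹ := by
        rw [one_div, hBdef, ← Finset.prod_inv_distrib]
    _ = ∏ i : Fin 4, (Real.sqrt (Real.sqrt ((q i : ℝ)^2 + m^2)))⁻¹ := rfl

set_option maxHeartbeats 1600000 in
/-- The one-loop melonic two-point subgraph has divergence degree ω = 2: its partial sums
grow quadratically in the momentum cutoff `N`. -/
theorem self_energy_quadratic_growth (m : ℝ) (hm : 0 < m) (p : ℤ) :
    ∃ c₁ c₂ : ℝ, 0 < c₁ ∧ c₁ ≤ c₂ ∧ ∃ N₀ : ℕ, ∀ N : ℕ, N₀ ≤ N →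
      c₁ * (N : ℝ) ^ 2 ≤
        (∑' q : {q : Fin 4 → ℤ // (∑ i, (q i) ^ 2) ≤ (N : ℤ) ^ 2}, 1 / A m p q.1) ∧
      (∑' q : {q : Fin 4 → ℤ // (∑ i, (q i) ^ 2) ≤ (N : ℤ) ^ 2}, 1 / A m p q.1) ≤
        c₂ * (N : ℝ) ^ 2 := by
  set C : ℝ := 3 * (p:ℝ)^2 + m^2 + 36 with hCdef
  have hC : 0 < C := by positivity
  set D : ℝ := ((Real.sqrt m)⁻¹ + 4)^4 with hDdef
  have hD : 0 ≤ D := by positivity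
  refine ⟨1/C, 1/C + D, by positivity, by linarith, 1, fun N hN => ?_⟩
  have hN1 : (1:ℝ) ≤ (N:ℝ) := by exact_mod_cast hN
  -- the finite index set
  set S : Finset (Fin 4 → ℤ) :=
    (Fintype.piFinset fun _ => Finset.Icc (-(N:ℤ)) N).filter
      (fun q => (∑ i, (q i) ^ 2) ≤ (N:ℤ)^2) with hSdef
  have hmem : ∀ q : Fin 4 → ℤ, ((∑ i, (q i) ^ 2) ≤ (N:ℤ)^2) ↔ q ∈ S := by
    intro q
    simp only [hSdef, Finset.mem_filter, Fintype.mem_piFinset, Finset.mem_Icc]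
    constructor
    · intro h
      refine ⟨fun i => ?_, h⟩
      have h1 : (q i)^2 ≤ ∑ j, (q j)^2 :=
        Finset.single_le_sum (f := fun j => (q j)^2) (fun j _ => sq_nonneg _)
          (Finset.mem_univ i)
      have h2 : (q i)^2 ≤ (N:ℤ)^2 := le_trans h1 h
      constructor <;> nlinarith
    · exact fun h => h.2
  have htsum : (∑' q : {q : Fin 4 → ℤ // (∑ i, (q i) ^ 2) ≤ (N : ℤ) ^ 2}, 1 / A m p q.1)
      = ∑ q ∈ S, 1 / A m p q := by
    rw [← Finset.tsum_subtype S (fun q => 1 / A m p q)]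
    exact (Equiv.subtypeEquivRight hmem).tsum_eq
      (fun b : {q : Fin 4 → ℤ // q ∈ S} => 1 / A m p b.1)
  rw [htsum]
  constructor
  · -- lower bound
    set K : ℕ := N / 2 with hKdef
    set T : Finset (Fin 4 → ℤ) := Fintype.piFinset fun _ => Finset.Icc (-(K:ℤ)) K with hTdef
    have hTS : T ⊆ S := by
      intro q hq
      simp only [hTdef, Fintype.mem_piFinset, Finset.mem_Icc] at hq
      rw [← hmem]
      have hsq : ∀ i, (q i)^2 ≤ (K:ℤ)^2 := fun i => by
        have := hq i; nlinarith [this.1, this.2]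
      have h2K : 2 * (K:ℤ) ≤ N := by
        have : 2 * K ≤ N := by omega
        exact_mod_cast this
      calc (∑ i, (q i)^2) ≤ ∑ i : Fin 4, (K:ℤ)^2 := Finset.sum_le_sum fun i _ => hsq i
        _ = 4 * (K:ℤ)^2 := by simp [Finset.sum_const]
        _ ≤ (N:ℤ)^2 := by nlinarith [Int.natCast_nonneg K]
    have hterm : ∀ q ∈ T, 1 / (C * (N:ℝ)^2) ≤ 1 / A m p q := by
      intro q hq
      simp only [hTdef, Fintype.mem_piFinset, Finset.mem_Icc] at hq
      have hqb : ∀ i, |(q i : ℝ)| ≤ (N:ℝ) := by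
        intro i
        have h1 := (hq i).1; have h2 := (hq i).2
        have hKN : (K:ℤ) ≤ N := by exact_mod_cast Nat.div_le_self N 2
        have : -(N:ℤ) ≤ q i ∧ q i ≤ N := ⟨le_trans (by omega) h1, le_trans h2 hKN⟩
        rw [abs_le]
        constructor
        · exact_mod_cast this.1
        · exact_mod_cast this.2
      have hAle : A m p q ≤ C * (N:ℝ)^2 := by
        unfold A
        rw [Fin.sum_univ_four, Fin.sum_univ_four]
        have b0 := abs_le.mp (hqb 0); have b1 := abs_le.mp (hqb 1)
        have b2 := abs_le.mp (hqb 2); have b3 := abs_le.mp (hqb 3)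
        rw [hCdef]
        set n : ℝ := (N:ℝ) with hndef
        have hn0 : (0:ℝ) ≤ n := by positivity
        have sq_bound : ∀ x : ℝ, -n ≤ x → x ≤ n → x^2 ≤ n^2 := by
          intro x hx1 hx2; nlinarith
        have s0 := sq_bound _ b0.1 b0.2
        have s1 := sq_bound _ b1.1 b1.2
        have s2 := sq_bound _ b2.1 b2.2
        have s3 := sq_bound _ b3.1 b3.2
        set Sy : ℝ := (q 0:ℝ) + q 1 + q 2 + q 3 with hSydef
        have hSy : -(4*n) ≤ Sy ∧ Sy ≤ 4*n := by
          constructor <;> · rw [hSydef]; linarith [b0.1,b0.2,b1.1,b1.2,b2.1,b2.2,b3.1,b3.2]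
        have hSy2 : Sy^2 ≤ 16*n^2 := by nlinarith [hSy.1, hSy.2]
        have hpS : ((p:ℝ) + Sy)^2 ≤ 2*(p:ℝ)^2 + 32*n^2 := by
          nlinarith [sq_nonneg ((p:ℝ) - Sy)]
        have hn2 : (1:ℝ) ≤ n^2 := by nlinarith [hN1]
        have hp2 : (p:ℝ)^2 ≤ (p:ℝ)^2 * n^2 := by nlinarith [sq_nonneg (p:ℝ)]
        have hm2 : m^2 ≤ m^2 * n^2 := by nlinarith [sq_nonneg m]
        nlinarith [sq_nonneg (p:ℝ), sq_nonneg m]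
      exact one_div_le_one_div_of_le (A_pos m hm p q) hAle
    have hcard : ((N:ℝ))^4 ≤ (T.card : ℝ) := by
      have hc : T.card = (2 * K + 1)^4 := by
        simp only [hTdef, Fintype.card_piFinset]
        have : (Finset.Icc (-(K:ℤ)) K).card = 2 * K + 1 := by
          rw [Int.card_Icc]
          omega
        simp [this]
      have hNle : N ≤ 2 * K + 1 := by omega
      have : N^4 ≤ (2*K+1)^4 := Nat.pow_le_pow_left hNle 4
      rw [hc]
      exact_mod_cast this
    calc 1/C * (N:ℝ)^2 = (N:ℝ)^4 * (1 / (C * (N:ℝ)^2)) := by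
          field_simp
      _ ≤ (T.card : ℝ) * (1 / (C * (N:ℝ)^2)) := by
          apply mul_le_mul_of_nonneg_right hcard
          positivity
      _ = ∑ q ∈ T, 1 / (C * (N:ℝ)^2) := by rw [Finset.sum_const, nsmul_eq_mul]
      _ ≤ ∑ q ∈ T, 1 / A m p q := Finset.sum_le_sum hterm
      _ ≤ ∑ q ∈ S, 1 / A m p q := Finset.sum_le_sum_of_subset_of_nonneg hTS
          (fun r _ _ => one_div_nonneg.mpr (A_pos m hm p r).le)
  · -- upper bound
    have hsub : S ⊆ Fintype.piFinset fun _ => Finset.Icc (-(N:ℤ)) N := Finset.filter_subset _ _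
    have h1 : ∑ q ∈ S, 1 / A m p q
        ≤ ∑ q ∈ Fintype.piFinset fun _ => Finset.Icc (-(N:ℤ)) N, 1 / A m p q :=
      Finset.sum_le_sum_of_subset_of_nonneg hsub
        (fun r _ _ => one_div_nonneg.mpr (A_pos m hm p r).le)
    have h2 : ∑ q ∈ Fintype.piFinset (fun _ => Finset.Icc (-(N:ℤ)) N), 1 / A m p q
        ≤ ∑ q ∈ Fintype.piFinset (fun _ => Finset.Icc (-(N:ℤ)) N),
            ∏ i : Fin 4, (Real.sqrt (Real.sqrt ((q i : ℝ)^2 + m^2)))⁻¹ :=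
      Finset.sum_le_sum fun q _ => pointwise_upper m hm p q
    have h3 : ∑ q ∈ Fintype.piFinset (fun _ => Finset.Icc (-(N:ℤ)) N),
            ∏ i : Fin 4, (Real.sqrt (Real.sqrt ((q i : ℝ)^2 + m^2)))⁻¹
        = (∑ k ∈ Finset.Icc (-(N:ℤ)) N, (Real.sqrt (Real.sqrt ((k:ℝ)^2 + m^2)))⁻¹)^4 := by
      have hps := Finset.prod_univ_sum (κ := fun _ : Fin 4 => ℤ)
        (fun _ => Finset.Icc (-(N:ℤ)) N)
        (fun _ k => (Real.sqrt (Real.sqrt ((k:ℝ)^2 + m^2)))⁻¹)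
      rw [← hps, Finset.prod_const, Finset.card_univ, Fintype.card_fin]
    have h4 := oneD_bound m hm N
    have hsum_nonneg : (0:ℝ) ≤ ∑ k ∈ Finset.Icc (-(N:ℤ)) N,
        (Real.sqrt (Real.sqrt ((k:ℝ)^2 + m^2)))⁻¹ :=
      Finset.sum_nonneg fun k _ => by positivity
    have hsqrtN : Real.sqrt N ≥ 1 := by
      rw [show (1:ℝ) = Real.sqrt 1 by simp]
      exact Real.sqrt_le_sqrt hN1
    have h5 : (∑ k ∈ Finset.Icc (-(N:ℤ)) N, (Real.sqrt (Real.sqrt ((k:ℝ)^2 + m^2)))⁻¹)^4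
        ≤ (((Real.sqrt m)⁻¹ + 4) * Real.sqrt N)^4 := by
      apply pow_le_pow_left₀ hsum_nonneg
      calc _ ≤ (Real.sqrt m)⁻¹ + 4 * Real.sqrt N := h4
        _ ≤ ((Real.sqrt m)⁻¹ + 4) * Real.sqrt N := by
            have him : (0:ℝ) ≤ (Real.sqrt m)⁻¹ := by positivity
            nlinarith [hsqrtN]
    have h6 : (((Real.sqrt m)⁻¹ + 4) * Real.sqrt N)^4 = D * (N:ℝ)^2 := by
      rw [hDdef, mul_pow]
      congr 1
      rw [show (4:ℕ) = 2*2 from rfl, pow_mul, Real.sq_sqrt (by positivity : (0:ℝ) ≤ (N:ℝ))]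
    have hfinal : ∑ q ∈ S, 1 / A m p q ≤ D * (N:ℝ)^2 := by
      calc ∑ q ∈ S, 1 / A m p q ≤ _ := h1
        _ ≤ _ := h2
        _ = _ := h3
        _ ≤ _ := h5
        _ = D * (N:ℝ)^2 := h6
    have hpos : (0:ℝ) < 1/C * (N:ℝ)^2 := by positivity
    nlinarith [hpos, hfinal]
end

section
/- For every integer p, the family of positive reals indexed by q ∈ ℤ⁴ given by q ↦ 1/A_p(q)² is not summable. (This expresses the logarithmic ultraviolet divergence of the bare one-loop melonic four-point function, i.e. that the quartic coupling is marginal, with divergence degree ω = 0.) -/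
open scoped BigOperators

/-- Logarithmic UV divergence of the bare one-loop melonic four-point function:
the squared propagator family is not summable (the quartic coupling is marginal, ω = 0). -/
theorem bare_four_point_not_summable (m : ℝ) (hm : 0 < m) (p : ℤ) :
    ¬ Summable (fun q : Fin 4 → ℤ => 1 / (A m p q) ^ 2) := by
  intro hsum
  set f : (Fin 4 → ℤ) → ℝ := fun q => 1 / (A m p q) ^ 2 with hf
  have hApos : ∀ q, 0 < A m p q := by
    intro q
    have h1 : 0 ≤ (p : ℝ) ^ 2 := sq_nonneg _
    have h2 : 0 ≤ ∑ i, ((q i : ℝ)) ^ 2 := Finset.sum_nonneg fun i _ => sq_nonneg _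
    have h3 : 0 ≤ ((p : ℝ) + ∑ i, (q i : ℝ)) ^ 2 := sq_nonneg _
    have h4 : 0 < m ^ 2 := by positivity
    unfold A; linarith
  have hfnonneg : ∀ q, 0 ≤ f q := by
    intro q
    have := hApos q
    simp only [hf]
    positivity
  set C : ℝ := 3 * (p : ℝ) ^ 2 + m ^ 2 + 144 with hCdef
  have hC : 0 < C := by positivity
  set F : ℕ → Finset (Fin 4 → ℤ) :=
    fun k => Fintype.piFinset (fun _ : Fin 4 => Finset.Ico ((2:ℤ)^k) (2^(k+1))) with hF
  have hcard : ∀ k, (F k).card = 16 ^ k := by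
    intro k
    have h1 : ((2:ℤ)^(k+1) - 2^k) = ((2^k : ℕ) : ℤ) := by push_cast; ring
    simp only [hF, Fintype.card_piFinset, Int.card_Ico, h1, Int.toNat_natCast,
      Finset.prod_const, Finset.card_univ, Fintype.card_fin]
    rw [show (16:ℕ) = 2^4 from rfl, ← pow_mul, ← pow_mul, Nat.mul_comm]
  have hbound : ∀ k, ∀ q ∈ F k, (C^2 * 16^k)⁻¹ ≤ f q := by
    intro k q hq
    rw [Fintype.mem_piFinset] at hq
    have hql : ∀ i, ((2:ℝ)^k) ≤ (q i : ℝ) := by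
      intro i
      have := (Finset.mem_Ico.mp (hq i)).1
      exact_mod_cast this
    have hqu : ∀ i, (q i : ℝ) ≤ 2 * 2^k := by
      intro i
      have h := (Finset.mem_Ico.mp (hq i)).2
      have h' : (q i : ℝ) < 2^(k+1) := by exact_mod_cast h
      rw [pow_succ, mul_comm] at h'
      linarith
    set t : ℝ := (2:ℝ)^k with htdef
    have ht0 : (0:ℝ) < t := by positivity
    have ht1 : (1:ℝ) ≤ t := one_le_pow₀ (by norm_num)
    have hA : A m p q ≤ C * 4 ^ k := by
      unfold A
      rw [Fin.sum_univ_four, Fin.sum_univ_four]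
      have hsq : ∀ i, ((q i : ℝ))^2 ≤ 4 * t^2 := by
        intro i
        nlinarith [hql i, hqu i]
      have h4k : (4:ℝ)^k = t^2 := by
        rw [htdef, show (4:ℝ) = 2^2 from by norm_num, ← pow_mul, mul_comm, pow_mul]
      rw [h4k, hCdef]
      set s : ℝ := (q 0 : ℝ) + q 1 + q 2 + q 3 with hsdef
      have hS0 : 0 ≤ s := by
        have := hql 0; have := hql 1; have := hql 2; have := hql 3
        rw [hsdef]; linarith
      have hS : s ≤ 8 * t := by
        have := hqu 0; have := hqu 1; have := hqu 2; have := hqu 3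
        rw [hsdef]; linarith
      have hs2 : s^2 ≤ 64 * t^2 := by nlinarith
      have hps : ((p:ℝ) + s)^2 ≤ 2*(p:ℝ)^2 + 2*s^2 := by nlinarith [sq_nonneg ((p:ℝ) - s)]
      have hpt : (p:ℝ)^2 ≤ (p:ℝ)^2 * t^2 := by
        nlinarith [sq_nonneg ((p:ℝ)*(t-1)), mul_nonneg (sq_nonneg (p:ℝ)) (sub_nonneg.mpr ht1)]
      have hmt : m^2 ≤ m^2 * t^2 := by
        nlinarith [sq_nonneg (m*(t-1)), mul_nonneg (sq_nonneg m) (sub_nonneg.mpr ht1)]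
      have h0 := hsq 0; have h1 := hsq 1; have h2 := hsq 2; have h3 := hsq 3
      have heq : (↑(q 0) + ↑(q 1) + ↑(q 2) + ↑(q 3) : ℝ) = s := by rw [hsdef]
      nlinarith [hps, hs2, hpt, hmt]
    have hA2 : (A m p q)^2 ≤ C^2 * 16^k := by
      have h16 : (16:ℝ)^k = (4^k) * (4^k) := by
        rw [show (16:ℝ) = 4*4 from by norm_num, mul_pow]
      have hnn : 0 ≤ A m p q := (hApos q).le
      calc (A m p q)^2 ≤ (C * 4^k)^2 := by
            apply pow_le_pow_left₀ hnn hA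
        _ = C^2 * 16^k := by rw [h16]; ring
    have hpos2 : 0 < (A m p q)^2 := pow_pos (hApos q) 2
    simp only [hf, one_div]
    exact inv_anti₀ hpos2 hA2
  have hsumk : ∀ k, (C^2)⁻¹ ≤ ∑ q ∈ F k, f q := by
    intro k
    have key := Finset.card_nsmul_le_sum (F k) f ((C^2 * 16^k)⁻¹) (hbound k)
    rw [hcard k, nsmul_eq_mul] at key
    have hc16 : ((16^k : ℕ) : ℝ) = (16:ℝ)^k := by push_cast; ring
    rw [hc16] at key
    have h16pos : (0:ℝ) < (16:ℝ)^k := by positivity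
    have heq : (16:ℝ)^k * (C^2 * 16^k)⁻¹ = (C^2)⁻¹ := by
      field_simp
    rw [heq] at key
    exact key
  have hdisj : ∀ k j : ℕ, k ≠ j → Disjoint (F k) (F j) := by
    intro k j hkj
    rw [Finset.disjoint_left]
    intro q hqk hqj
    rw [Fintype.mem_piFinset] at hqk hqj
    have hk := Finset.mem_Ico.mp (hqk 0)
    have hj := Finset.mem_Ico.mp (hqj 0)
    rcases lt_or_gt_of_ne hkj with h | h
    · have : (2:ℤ)^(k+1) ≤ 2^j := pow_le_pow_right₀ (by norm_num) h
      omega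
    · have : (2:ℤ)^(j+1) ≤ 2^k := pow_le_pow_right₀ (by norm_num) h
      omega
  have hmain : ∀ K : ℕ, (K : ℝ) * (C^2)⁻¹ ≤ ∑' q, f q := by
    intro K
    have hpd : (↑(Finset.range K) : Set ℕ).PairwiseDisjoint F := by
      intro a _ b _ hab
      exact hdisj a b hab
    have h1 : ∑ q ∈ (Finset.range K).biUnion F, f q
        = ∑ k ∈ Finset.range K, ∑ q ∈ F k, f q := Finset.sum_biUnion hpd
    have h2 : (K : ℝ) * (C^2)⁻¹ ≤ ∑ k ∈ Finset.range K, ∑ q ∈ F k, f q := by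
      calc (K : ℝ) * (C^2)⁻¹ = ∑ _k ∈ Finset.range K, (C^2)⁻¹ := by
            rw [Finset.sum_const, Finset.card_range, nsmul_eq_mul]
        _ ≤ _ := Finset.sum_le_sum fun k _ => hsumk k
    have h3 := Summable.sum_le_tsum ((Finset.range K).biUnion F) (fun q _ => hfnonneg q) hsum
    linarith [h1 ▸ h3]
  obtain ⟨K, hK⟩ := exists_nat_gt (C^2 * ∑' q, f q)
  have hC2 : (0:ℝ) < C^2 := by positivity
  have h' : (K:ℝ) * (C^2)⁻¹ = (K:ℝ) / C^2 := by ring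
  have h2 : (K:ℝ) / C^2 ≤ ∑' q, f q := h' ▸ hmain K
  have h3 : (K:ℝ) ≤ (∑' q, f q) * C^2 := (div_le_iff₀ hC2).mp h2
  nlinarith
end

section
/- For every integer p, the family indexed by q ∈ ℤ⁴ given by q ↦ 1/A_p(q)² − 1/A_0(q)² is summable. (The termwise subtraction of its value at zero external momentum renders the one-loop melonic four-point function ultraviolet finite, which is the one-loop content of the renormalized four-point equation.) -/
open scoped BigOperators

/-! The counterterm cancels the leading behaviour: `A_p(q) - A_0(q) = 2p² + 2p S(q)` with
`S(q)² ≤ A_0(q)`, so `|1/A_p² - 1/A_0²| = O(A_0^{-5/2})` rather than `O(A_0^{-2})`. Since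
`A_0(q) ≳ 1 + |q|²`, the family is dominated by `(1 + |q|²)^{-5/2}`, which is summable on `ℤ⁴`
because `5 > 4`: bound it by `∏ᵢ (1 + qᵢ²)^{-5/8}`, a product of convergent one-dimensional
series. -/

open Finset

lemma summable_pi_prod {ι α : Type*} [Fintype ι] {f : ι → α → ℝ} (hf₀ : ∀ i a, 0 ≤ f i a)
    (hf : ∀ i, Summable (f i)) : Summable fun x : ι → α => ∏ i, f i (x i) := by
  classical
  refine summable_of_sum_le (c := ∏ i, ∑' a, f i a)
    (fun x => prod_nonneg fun i _ => hf₀ i _) fun s => ?_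
  calc ∑ x ∈ s, ∏ i, f i (x i)
      ≤ ∑ x ∈ Fintype.piFinset fun i => s.image (· i), ∏ i, f i (x i) :=
        sum_le_sum_of_subset_of_nonneg
          (fun x hx => Fintype.mem_piFinset.2 fun i => mem_image_of_mem _ hx)
          fun x _ _ => prod_nonneg fun i _ => hf₀ i _
    _ = ∏ i, ∑ a ∈ s.image (· i), f i a := (prod_univ_sum _ _).symm
    _ ≤ ∏ i, ∑' a, f i a :=
        prod_le_prod (fun i _ => sum_nonneg fun a _ => hf₀ i a)
          fun i _ => (hf i).sum_le_tsum _ fun a _ => hf₀ i a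

lemma summable_one_add_sq_rpow_neg {r : ℝ} (hr : 1 / 2 < r) :
    Summable fun n : ℤ => (1 + (n : ℝ) ^ 2) ^ (-r) := by
  refine (Real.summable_abs_int_rpow (b := 2 * r) (by linarith)).of_norm_bounded_eventually ?_
  filter_upwards [(Set.finite_singleton (0 : ℤ)).compl_mem_cofinite] with n hn
  have hn₀ : (n : ℝ) ≠ 0 := by simpa using hn
  rw [Real.norm_of_nonneg (by positivity), ← mul_neg, Real.rpow_mul (abs_nonneg _), Real.rpow_two,
    sq_abs]
  exact Real.rpow_le_rpow_of_nonpos (by positivity) (by linarith) (by linarith)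

lemma one_add_sum_sq_rpow_neg_le_prod {ι : Type*} [Fintype ι] (x : ι → ℝ) {r : ℝ} (hr : 0 ≤ r) :
    (1 + ∑ i, x i ^ 2) ^ (-(Fintype.card ι * r)) ≤ ∏ i, (1 + x i ^ 2) ^ (-r) := by
  calc (1 + ∑ i, x i ^ 2) ^ (-(Fintype.card ι * r))
      = ∏ _i : ι, (1 + ∑ i, x i ^ 2) ^ (-r) := by
        rw [prod_const, card_univ, ← Real.rpow_natCast, ← Real.rpow_mul (by positivity)]
        ring_nf
    _ ≤ ∏ i, (1 + x i ^ 2) ^ (-r) :=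
        prod_le_prod (fun _ _ => by positivity) fun i _ =>
          Real.rpow_le_rpow_of_nonpos (by positivity)
            (by gcongr; exact single_le_sum (fun j _ => sq_nonneg (x j)) (mem_univ i))
            (by linarith)

lemma summable_one_add_sum_sq_rpow_neg {ι : Type*} [Fintype ι] {r : ℝ}
    (hr : Fintype.card ι / 2 < r) :
    Summable fun q : ι → ℤ => (1 + ∑ i, (q i : ℝ) ^ 2) ^ (-r) := by
  cases isEmpty_or_nonempty ι
  · exact .of_finite
  have hcard : (0 : ℝ) < Fintype.card ι := by exact_mod_cast Fintype.card_pos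
  have hr' : 1 / 2 < r / Fintype.card ι := by
    rwa [lt_div_iff₀ hcard, div_mul_eq_mul_div, one_mul]
  refine (summable_pi_prod (fun _ _ => by positivity)
    fun _ => summable_one_add_sq_rpow_neg hr').of_nonneg_of_le (fun _ => by positivity)
    fun q => ?_
  convert one_add_sum_sq_rpow_neg_le_prod (fun i => (q i : ℝ)) (r := r / Fintype.card ι)
    (by positivity) using 3
  field_simp

lemma abs_inv_sq_sub_inv_sq_le {B b p μ : ℝ} (hμ : 0 < μ) (hμB : μ ^ 2 ≤ B) (hbB : b ^ 2 ≤ B) :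
    |1 / (B + 2 * p ^ 2 + 2 * p * b) ^ 2 - 1 / B ^ 2|
      ≤ 24 * (p ^ 2 / μ + |p|) * (p ^ 2 / μ ^ 2 + 1) * B ^ (-(5 / 2 : ℝ)) := by
  set P := B + 2 * p ^ 2 + 2 * p * b
  have hB : 0 < B := (pow_pos hμ 2).trans_le hμB
  obtain ⟨t, ht, rfl⟩ : ∃ t, 0 < t ∧ B = t ^ 2 := ⟨√B, by positivity, (Real.sq_sqrt hB.le).symm⟩
  have hμt : μ ≤ t := (pow_le_pow_iff_left₀ hμ.le ht.le two_ne_zero).1 hμB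
  have hbt : |b| ≤ t := abs_le_of_sq_le_sq hbB ht.le
  have hPB : t ^ 2 / 2 ≤ P := by nlinarith [sq_nonneg (b + 2 * p)]
  have hP : 0 < P := by linarith [half_pos (pow_pos ht 2)]
  have hdiff : |P - t ^ 2| ≤ 2 * (p ^ 2 / μ + |p|) * t := by
    have : p ^ 2 ≤ p ^ 2 / μ * t := by
      rw [div_mul_eq_mul_div, le_div_iff₀ hμ]; exact mul_le_mul_of_nonneg_left hμt (sq_nonneg p)
    calc |P - t ^ 2| = |2 * p ^ 2 + 2 * p * b| := by
          rw [show P - t ^ 2 = 2 * p ^ 2 + 2 * p * b by simp only [P]; ring]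
      _ ≤ 2 * p ^ 2 + 2 * |p| * |b| := by
          refine (abs_add_le _ _).trans ?_; simp [abs_mul]
      _ ≤ 2 * (p ^ 2 / μ + |p|) * t := by nlinarith [abs_nonneg p]
  have hsum : P + t ^ 2 ≤ 3 * (p ^ 2 / μ ^ 2 + 1) * t ^ 2 := by
    have : p ^ 2 ≤ p ^ 2 / μ ^ 2 * t ^ 2 := by
      rw [div_mul_eq_mul_div, le_div_iff₀ (by positivity)]
      exact mul_le_mul_of_nonneg_left hμB (sq_nonneg p)
    nlinarith [sq_nonneg (p - b)]
  have hrpow : (t ^ 2) ^ (-(5 / 2 : ℝ)) = 1 / t ^ 5 := by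
    rw [← Real.rpow_natCast, ← Real.rpow_mul ht.le,
      show ((2 : ℕ) : ℝ) * -(5 / 2) = -(5 : ℕ) by norm_num, Real.rpow_neg ht.le, Real.rpow_natCast,
      one_div]
  calc |1 / P ^ 2 - 1 / (t ^ 2) ^ 2| = |P - t ^ 2| * (P + t ^ 2) / (P ^ 2 * t ^ 4) := by
        rw [show 1 / P ^ 2 - 1 / (t ^ 2) ^ 2 = (t ^ 2 - P) * (P + t ^ 2) / (P ^ 2 * t ^ 4) by
            field_simp; ring, abs_div, abs_mul, abs_sub_comm,
          abs_of_pos (by positivity : 0 < P + t ^ 2), abs_of_pos (by positivity : 0 < P ^ 2 * t ^ 4)]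
    _ ≤ (2 * (p ^ 2 / μ + |p|) * t) * (3 * (p ^ 2 / μ ^ 2 + 1) * t ^ 2)
          / ((t ^ 2 / 2) ^ 2 * t ^ 4) := by
        gcongr
    _ = _ := by rw [hrpow]; field_simp; ring

lemma A_eq_A_zero_add (m : ℝ) (p : ℤ) (q : Fin 4 → ℤ) :
    A m p q = A m 0 q + 2 * (p : ℝ) ^ 2 + 2 * p * ∑ i, (q i : ℝ) := by
  simp only [A]; push_cast; ring

lemma A_zero_eq (m : ℝ) (q : Fin 4 → ℤ) :
    A m 0 q = ∑ i, (q i : ℝ) ^ 2 + (∑ i, (q i : ℝ)) ^ 2 + m ^ 2 := by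
  simp [A]

lemma sum_sq_coe_nonneg (q : Fin 4 → ℤ) : 0 ≤ ∑ i, (q i : ℝ) ^ 2 :=
  sum_nonneg fun _ _ => sq_nonneg _

lemma min_one_sq_mul_le_A_zero (m : ℝ) (q : Fin 4 → ℤ) :
    min 1 (m ^ 2) * (1 + ∑ i, (q i : ℝ) ^ 2) ≤ A m 0 q := by
  have h1 := min_le_left 1 (m ^ 2)
  have h2 := min_le_right 1 (m ^ 2)
  rw [A_zero_eq]
  nlinarith [sum_sq_coe_nonneg q, sq_nonneg (∑ i, (q i : ℝ)), le_min zero_le_one (sq_nonneg m)]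

/-- The termwise subtraction of its value at zero external momentum renders the one-loop
melonic four-point function UV finite. -/
theorem renormalized_four_point_summable (m : ℝ) (hm : 0 < m) (p : ℤ) :
    Summable (fun q : Fin 4 → ℤ => 1 / (A m p q) ^ 2 - 1 / (A m 0 q) ^ 2) := by
  set K : ℝ := 24 * ((p : ℝ) ^ 2 / m + |(p : ℝ)|) * ((p : ℝ) ^ 2 / m ^ 2 + 1)
  have hK : 0 ≤ K := by positivity
  set c : ℝ := min 1 (m ^ 2)
  have hc : 0 < c := lt_min one_pos (by positivity)
  refine Summable.of_norm_bounded ((summable_one_add_sum_sq_rpow_neg (ι := Fin 4) (r := 5 / 2)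
    (by norm_num)).mul_left (K * c ^ (-(5 / 2 : ℝ)))) fun q => ?_
  have hmA : m ^ 2 ≤ A m 0 q := by
    rw [A_zero_eq]; nlinarith [sum_sq_coe_nonneg q, sq_nonneg (∑ i, (q i : ℝ))]
  have hSA : (∑ i, (q i : ℝ)) ^ 2 ≤ A m 0 q := by
    rw [A_zero_eq]; nlinarith [sum_sq_coe_nonneg q]
  rw [Real.norm_eq_abs, A_eq_A_zero_add]
  calc _ ≤ K * A m 0 q ^ (-(5 / 2 : ℝ)) := abs_inv_sq_sub_inv_sq_le hm hmA hSA
    _ ≤ K * (c * (1 + ∑ i, (q i : ℝ) ^ 2)) ^ (-(5 / 2 : ℝ)) :=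
        mul_le_mul_of_nonneg_left (Real.rpow_le_rpow_of_nonpos (by positivity)
          (min_one_sq_mul_le_A_zero m q) (by norm_num)) hK
    _ = _ := by rw [Real.mul_rpow hc.le (by positivity)]; ring
end

section
/- For every integer p there exists a constant C > 0 such that for all real Λ ≥ 2: |∫_{1/Λ²}^{∞} e^{−αm²}·(∑_{q ∈ ℤ⁴} e^{−α(p² + q₁²+q₂²+q₃²+q₄² + (p+S(q))²)}) dα − (π²/√5)·(Λ² − 2(m² + (6/5)p²)·log Λ)| ≤ C. (This is the asymptotic expansion, in the Schwinger-parametric cutoff Λ, of the one-loop melonic self-energy of the model: the quadratic divergence has coefficient π²/√5, the mass logarithmic divergence has coefficient −2π²m²/√5, and the wave-function logarithmic divergence has coefficient −(12π²/(5√5))p² per color.) -/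
/-!
Summing out the four free momenta one at a time, each step is a one-dimensional Gaussian sum
over a shifted lattice. Poisson summation (Jacobi's theta transformation) evaluates such a sum
up to a relative error `4 exp (-π² / (2α)) ≤ α²`, so for `α ≤ 1` the inner sum equals
`π² / (√5 α²) · exp (-α p² / 5)` up to `O(1)`, and the integrand equals
`(π²/√5) (α⁻² - (m² + 6p²/5) α⁻¹) + O(1)` after expanding `exp (-(m² + 6p²/5) α)` to first order.
Integrating over `(1/Λ², 1]` produces the two divergent terms; the integral over `(1, ∞)` is a
constant because the integrand is dominated by a multiple of `exp (-α m²)`.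
-/

open MeasureTheory Real Set

noncomputable section

lemma summable_exp_neg_mul_int_sq {a : ℝ} (ha : 0 < a) :
    Summable fun n : ℤ => rexp (-a * n ^ 2) := by
  refine ((summable_jacobiTheta₂_term_iff 0 (Complex.I * (a / π))).2 ?_).norm.congr fun n => ?_
  · simp only [Complex.mul_im, Complex.I_re, Complex.I_im]
    norm_cast
    simp only [zero_mul, one_mul]
    positivity
  · rw [norm_jacobiTheta₂_term]
    simp only [Complex.mul_im, Complex.I_re, Complex.I_im, Complex.zero_im]
    norm_cast
    field_simp
    ring_nf

lemma tsum_exp_neg_mul_add_one_sq_le {b : ℝ} (hb : log 2 ≤ b) :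
    ∑' n : ℕ, rexp (-b * ((n : ℝ) + 1) ^ 2) ≤ 2 * rexp (-b) := by
  set r := rexp (-b)
  have hr : r ≤ 1 / 2 := by
    rw [← exp_log (by norm_num : (0 : ℝ) < 1 / 2), one_div, log_inv]
    exact exp_le_exp.2 (by linarith)
  have hgeom : HasSum (fun n : ℕ => r ^ (n + 1)) (r / (1 - r)) := by
    simp_rw [pow_succ', div_eq_mul_inv]
    exact (hasSum_geometric_of_lt_one (exp_pos _).le (by linarith)).mul_left r
  have hle : ∀ n : ℕ, rexp (-b * ((n : ℝ) + 1) ^ 2) ≤ r ^ (n + 1) := fun n => by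
    rw [← exp_nat_mul]
    refine exp_le_exp.2 ?_
    have hb0 : 0 ≤ b := (log_pos one_lt_two).le.trans hb
    push_cast
    nlinarith [mul_nonneg hb0 (Nat.cast_nonneg (α := ℝ) n)]
  calc ∑' n : ℕ, rexp (-b * ((n : ℝ) + 1) ^ 2)
      ≤ r / (1 - r) :=
        ((Summable.of_nonneg_of_le (fun _ => (exp_pos _).le) hle hgeom.summable).tsum_le_tsum
          hle hgeom.summable).trans_eq hgeom.tsum_eq
    _ ≤ 2 * r := by
        rw [div_le_iff₀ (by linarith)]
        nlinarith [exp_pos (-b)]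

lemma norm_tsum_sub_apply_zero_le {E : Type*} [NormedAddCommGroup E] [CompleteSpace E]
    {f : ℤ → E} {b : ℝ} (hb : log 2 ≤ b) (hf : ∀ n, ‖f n‖ ≤ rexp (-b * n ^ 2)) :
    ‖∑' n, f n - f 0‖ ≤ 4 * rexp (-b) := by
  have hb0 : 0 < b := (log_pos one_lt_two).trans_le hb
  have hsum : Summable f := .of_norm_bounded (summable_exp_neg_mul_int_sq hb0) hf
  have htail : ∀ e : ℕ → ℤ, Function.Injective e → (∀ n, (e n : ℝ) ^ 2 = ((n : ℝ) + 1) ^ 2) →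
      ‖∑' n, f (e n)‖ ≤ 2 * rexp (-b) := fun e he hsq =>
    calc ‖∑' n, f (e n)‖
        ≤ ∑' n : ℕ, rexp (-b * ((n : ℝ) + 1) ^ 2) := by
          refine tsum_of_norm_bounded (Summable.hasSum ?_) fun n =>
            (hf (e n)).trans_eq (by rw [hsq])
          exact ((summable_exp_neg_mul_int_sq hb0).comp_injective he).congr fun n => by
            simp only [Function.comp, hsq]
      _ ≤ 2 * rexp (-b) := tsum_exp_neg_mul_add_one_sq_le hb
  have hpos := htail (fun n => n + 1) (fun i j h => by simpa using h) fun n => by push_cast; ring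
  have hneg := htail (fun n => -(n + 1)) (fun i j h => by simpa using h) fun n => by push_cast; ring
  rw [tsum_of_add_one_of_neg_add_one (hsum.comp_injective fun i j h => by simpa using h)
    (hsum.comp_injective fun i j h => by simpa using h), add_sub_right_comm, add_sub_cancel_right]
  calc _ ≤ ‖∑' (n : ℕ), f (n + 1)‖ + ‖∑' (n : ℕ), f (-(n + 1))‖ := norm_add_le _ _
    _ ≤ 4 * rexp (-b) := by linarith

lemma ofReal_tsum_exp_neg_mul_add_sq {a : ℝ} (ha : 0 < a) (x : ℝ) :
    ((∑' n : ℤ, rexp (-a * (n + x) ^ 2) : ℝ) : ℂ) =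
      √(π / a) * ∑' n : ℤ, Complex.exp (-(π ^ 2 / a) * n ^ 2 + 2 * π * x * n * Complex.I) := by
  have hπ : (π : ℂ) ≠ 0 := Complex.ofReal_ne_zero.2 pi_ne_zero
  have ha' : (a : ℂ) ≠ 0 := Complex.ofReal_ne_zero.2 ha.ne'
  -- both sides of the theta transformation at `a / π`, `-(a x) / π` carry a factor `exp (a x²)`
  have key := Complex.tsum_exp_neg_quadratic (a := (a / π : ℝ))
    (by rw [Complex.ofReal_re]; positivity) (-(a * x) / π : ℝ)
  have hlhs : ∀ n : ℤ, Complex.exp (-π * (a / π : ℝ) * n ^ 2 + 2 * π * (-(a * x) / π : ℝ) * n) =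
      Complex.exp (a * x ^ 2) * ((rexp (-a * (n + x) ^ 2) : ℝ) : ℂ) := fun n => by
    rw [Complex.ofReal_exp, ← Complex.exp_add]
    congr 1
    push_cast
    field_simp
    ring
  have hrhs : ∀ n : ℤ, Complex.exp (-π / (a / π : ℝ) * (n + Complex.I * (-(a * x) / π : ℝ)) ^ 2) =
      Complex.exp (a * x ^ 2) *
        Complex.exp (-(π ^ 2 / a) * n ^ 2 + 2 * π * x * n * Complex.I) := fun n => by
    rw [← Complex.exp_add]
    congr 1
    push_cast
    field_simp
    ring_nf
    rw [Complex.I_sq]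
    ring
  have hcoef : 1 / ((a / π : ℝ) : ℂ) ^ (1 / 2 : ℂ) = (√(π / a) : ℝ) := by
    rw [show (1 / 2 : ℂ) = ((1 / 2 : ℝ) : ℂ) by norm_num, ← Complex.ofReal_cpow (by positivity),
      ← sqrt_eq_rpow, one_div, ← Complex.ofReal_inv, ← sqrt_inv, inv_div]
  simp_rw [hlhs, hrhs, tsum_mul_left, hcoef, ← Complex.ofReal_tsum] at key
  rw [mul_left_comm] at key
  exact mul_left_cancel₀ (Complex.exp_ne_zero _) key

lemma abs_tsum_exp_neg_mul_add_sq_sub_le {a : ℝ} (ha : 0 < a) (ha2 : a ≤ 2) (x : ℝ) :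
    |∑' n : ℤ, rexp (-a * (n + x) ^ 2) - √(π / a)| ≤ √(π / a) * (4 * rexp (-(π ^ 2 / a))) := by
  have hb : log 2 ≤ π ^ 2 / a := by
    have h9 : 9 / 2 ≤ π ^ 2 / a := by
      rw [le_div_iff₀ ha]; nlinarith [pi_gt_three]
    linarith [log_two_lt_d9]
  set g : ℤ → ℂ := fun n => Complex.exp (-(π ^ 2 / a) * n ^ 2 + 2 * π * x * n * Complex.I)
  have hg : ∀ n, ‖g n‖ ≤ rexp (-(π ^ 2 / a) * n ^ 2) := fun n => by
    have hre : (-(π ^ 2 / a) * n ^ 2 + 2 * π * x * n * Complex.I : ℂ) =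
        (-(π ^ 2 / a) * n ^ 2 : ℝ) + (2 * π * x * n : ℝ) * Complex.I := by push_cast; ring
    rw [show g n = _ from congrArg Complex.exp hre, Complex.norm_exp, Complex.add_re,
      Complex.ofReal_re, Complex.re_ofReal_mul, Complex.I_re, mul_zero, add_zero]
  have hg0 : g 0 = 1 := by simp [g]
  rw [← Real.norm_eq_abs, ← Complex.norm_real, Complex.ofReal_sub,
    ofReal_tsum_exp_neg_mul_add_sq ha, ← mul_one (√(π / a) : ℂ), mul_assoc, ← mul_sub, one_mul,
    ← hg0, norm_mul, Complex.norm_real, norm_of_nonneg (sqrt_nonneg _)]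
  exact mul_le_mul_of_nonneg_left (norm_tsum_sub_apply_zero_le hb hg) (sqrt_nonneg _)

def thetaError (α : ℝ) : ℝ := 4 * rexp (-(π ^ 2 / (2 * α)))

lemma thetaError_nonneg (α : ℝ) : 0 ≤ thetaError α := by unfold thetaError; positivity

lemma thetaError_le_sq {α : ℝ} (hα : 0 < α) : thetaError α ≤ α ^ 2 := by
  have hexp : rexp (-(π ^ 2 / (2 * α))) ≤ rexp (-(4 / α)) := by
    refine exp_le_exp.2 (neg_le_neg ?_)
    have : 8 < π ^ 2 := by nlinarith [pi_gt_three]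
    rw [div_le_div_iff₀ hα (by positivity)]
    nlinarith
  have hquad : 4 / α ^ 2 ≤ rexp (4 / α) := by
    have := quadratic_le_exp_of_nonneg (x := 4 / α) (by positivity)
    have : (4 / α) ^ 2 / 2 = 2 * (4 / α ^ 2) := by ring
    have : 0 < 4 / α := by positivity
    have : 0 < 4 / α ^ 2 := by positivity
    linarith
  unfold thetaError
  calc 4 * rexp (-(π ^ 2 / (2 * α))) ≤ 4 * rexp (-(4 / α)) := by gcongr
    _ ≤ α ^ 2 := by
      rw [exp_neg, ← div_eq_mul_inv, div_le_iff₀ (exp_pos _)]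
      rwa [div_le_iff₀ (by positivity), mul_comm] at hquad

lemma summable_exp_neg_mul_sq_mul_exp {α j : ℝ} (hα : 0 < α) (hj : 0 < j) (x : ℝ) :
    Summable fun n : ℤ => rexp (-α * n ^ 2) * rexp (-α * (x + n) ^ 2 / j) :=
  .of_nonneg_of_le (fun _ => by positivity)
    (fun n => mul_le_of_le_one_right (exp_pos _).le (exp_le_one_iff.2 (by
      rw [neg_mul, neg_div]; exact neg_nonpos.2 (by positivity))))
    (summable_exp_neg_mul_int_sq hα)

lemma abs_tsum_exp_neg_mul_sq_mul_exp_sub_le {α j : ℝ} (hα : 0 < α) (hα1 : α ≤ 1) (hj : 1 ≤ j)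
    (x : ℝ) :
    |∑' n : ℤ, rexp (-α * n ^ 2) * rexp (-α * (x + n) ^ 2 / j)
        - √(π * j / ((j + 1) * α)) * rexp (-α * x ^ 2 / (j + 1))|
      ≤ thetaError α * (√(π * j / ((j + 1) * α)) * rexp (-α * x ^ 2 / (j + 1))) := by
  have hj0 : 0 < j := by linarith
  set a := α * (j + 1) / j with ha_def
  have ha : 0 < a := by positivity
  have ha2α : a ≤ 2 * α := by rw [div_le_iff₀ hj0]; nlinarith
  -- completing the square in `n`
  have hterm : ∀ n : ℤ, rexp (-α * n ^ 2) * rexp (-α * (x + n) ^ 2 / j) =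
      rexp (-α * x ^ 2 / (j + 1)) * rexp (-a * (n + x / (j + 1)) ^ 2) := fun n => by
    rw [← exp_add, ← exp_add, ha_def]
    congr 1
    field_simp
    ring
  have hsqrt : √(π / a) = √(π * j / ((j + 1) * α)) := by rw [ha_def]; congr 1; field_simp
  have hexp : rexp (-(π ^ 2 / a)) ≤ rexp (-(π ^ 2 / (2 * α))) :=
    exp_le_exp.2 (neg_le_neg (div_le_div_of_nonneg_left (by positivity) ha ha2α))
  have htheta := abs_tsum_exp_neg_mul_add_sq_sub_le ha (by linarith) (x / (j + 1))
  rw [hsqrt] at htheta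
  rw [tsum_congr hterm, tsum_mul_left, mul_comm (√_), ← mul_sub, abs_mul, abs_of_pos (exp_pos _)]
  set s := √(π * j / ((j + 1) * α))
  set E := rexp (-α * x ^ 2 / (j + 1))
  calc _ ≤ E * (s * (4 * rexp (-(π ^ 2 / a)))) := by gcongr
    _ ≤ E * (s * thetaError α) := by unfold thetaError; gcongr
    _ = _ := by ring

lemma summable_and_abs_tsum_sub_tsum_le {ι : Type*} {f g : ι → ℝ} {η : ℝ} (hg : Summable g)
    (h : ∀ i, |f i - g i| ≤ η * g i) :
    Summable f ∧ |∑' i, f i - ∑' i, g i| ≤ η * ∑' i, g i := by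
  have hfg : Summable (f - g) := .of_norm_bounded (hg.mul_left η) h
  have hf : Summable f := by simpa using hfg.add hg
  refine ⟨hf, ?_⟩
  rw [← hf.tsum_sub hg, ← tsum_mul_left, ← Real.norm_eq_abs]
  exact tsum_of_norm_bounded (hg.mul_left η).hasSum h

def constrainedGaussian (k : ℕ) (α d : ℝ) (q : Fin k → ℤ) : ℝ :=
  rexp (-α * (∑ i, (q i : ℝ) ^ 2 + (d + ∑ i, (q i : ℝ)) ^ 2))

/-- The integral of `constrainedGaussian k α d` over `ℝᵏ`: the quadratic form `|q|² + (∑ q)²`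
has determinant `k + 1`, and `|q|² + (d + ∑ q)²` has minimum `d² / (k + 1)`. -/
def constrainedGaussianAsymp (k : ℕ) (α d : ℝ) : ℝ :=
  √((π / α) ^ k / (k + 1)) * rexp (-α * d ^ 2 / (k + 1))

lemma constrainedGaussian_cons (k : ℕ) (α d : ℝ) (n : ℤ) (q : Fin k → ℤ) :
    constrainedGaussian (k + 1) α d (Fin.cons n q) =
      rexp (-α * n ^ 2) * constrainedGaussian k α (d + n) q := by
  simp only [constrainedGaussian, Fin.sum_univ_succ, Fin.cons_zero, Fin.cons_succ, ← exp_add]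
  congr 1
  ring

lemma constrainedGaussian_anti (k : ℕ) {α β : ℝ} (hβα : β ≤ α) (d : ℝ) (q : Fin k → ℤ) :
    constrainedGaussian k α d q ≤ constrainedGaussian k β d q :=
  exp_le_exp.2 (by nlinarith [show 0 ≤ ∑ i, (q i : ℝ) ^ 2 + (d + ∑ i, (q i : ℝ)) ^ 2 by positivity])

lemma constrainedGaussianAsymp_succ (k : ℕ) {α : ℝ} (hα : 0 < α) (d : ℝ) :
    constrainedGaussianAsymp (k + 1) α d = √((π / α) ^ k / (k + 1)) *
      (√(π * (k + 1) / ((k + 1 + 1) * α)) * rexp (-α * d ^ 2 / (k + 1 + 1))) := by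
  rw [constrainedGaussianAsymp, ← mul_assoc, ← sqrt_mul (by positivity)]
  congr 2
  · rw [div_pow, div_pow, pow_succ]
    field_simp
    push_cast
    ring
  · push_cast; ring

lemma tsum_constrainedGaussian_succ {k : ℕ} {α : ℝ} (d : ℝ)
    (hk : ∀ d, Summable (constrainedGaussian k α d))
    (hout : Summable fun n : ℤ => rexp (-α * n ^ 2) * ∑' q, constrainedGaussian k α (d + n) q) :
    Summable (constrainedGaussian (k + 1) α d) ∧
      ∑' q, constrainedGaussian (k + 1) α d q =
        ∑' n : ℤ, rexp (-α * n ^ 2) * ∑' q, constrainedGaussian k α (d + n) q := by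
  set e := Fin.consEquiv fun _ : Fin (k + 1) => ℤ
  have hcomp : constrainedGaussian (k + 1) α d ∘ e =
      fun p => rexp (-α * p.1 ^ 2) * constrainedGaussian k α (d + p.1) p.2 :=
    funext fun p => constrainedGaussian_cons k α d p.1 p.2
  have hprod : Summable fun p : ℤ × (Fin k → ℤ) =>
      rexp (-α * p.1 ^ 2) * constrainedGaussian k α (d + p.1) p.2 :=
    (summable_prod_of_nonneg fun p => by simp only [constrainedGaussian]; positivity).2
      ⟨fun n => (hk (d + n)).mul_left (rexp (-α * n ^ 2)), hout.congr fun n => tsum_mul_left.symm⟩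
  refine ⟨e.summable_iff.1 (hcomp ▸ hprod), ?_⟩
  rw [← e.tsum_eq]
  change ∑' p, (constrainedGaussian (k + 1) α d ∘ e) p = _
  rw [hcomp, hprod.tsum_prod]
  simp only [tsum_mul_left]

lemma summable_and_abs_tsum_constrainedGaussian_succ_sub_le {k : ℕ} {α η : ℝ} (hα : 0 < α)
    (hα1 : α ≤ 1) (hη : 0 ≤ η)
    (hk : ∀ d, Summable (constrainedGaussian k α d) ∧
      |∑' q, constrainedGaussian k α d q - constrainedGaussianAsymp k α d|
        ≤ η * constrainedGaussianAsymp k α d) (d : ℝ) :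
    Summable (constrainedGaussian (k + 1) α d) ∧
      |∑' q, constrainedGaussian (k + 1) α d q - constrainedGaussianAsymp (k + 1) α d|
        ≤ ((1 + η) * (1 + thetaError α) - 1) * constrainedGaussianAsymp (k + 1) α d := by
  set δ := thetaError α
  set A := constrainedGaussianAsymp (k + 1) α d
  set w : ℤ → ℝ := fun n => rexp (-α * n ^ 2)
  set c := √((π / α) ^ k / (k + 1))
  have hasymp : ∀ n : ℤ, w n * constrainedGaussianAsymp k α (d + n) =
      c * (rexp (-α * n ^ 2) * rexp (-α * (d + n) ^ 2 / (k + 1))) := fun n => by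
    rw [constrainedGaussianAsymp]; ring
  have hsumM : Summable fun n : ℤ => w n * constrainedGaussianAsymp k α (d + n) := by
    simp_rw [hasymp]
    exact (summable_exp_neg_mul_sq_mul_exp hα (by positivity) d).mul_left c
  have hinner := summable_and_abs_tsum_sub_tsum_le (η := η) hsumM
    (f := fun n : ℤ => w n * ∑' q, constrainedGaussian k α (d + n) q) fun n => by
      rw [← mul_sub, abs_mul, abs_of_pos (exp_pos _), mul_left_comm]
      exact mul_le_mul_of_nonneg_left (hk (d + n)).2 (exp_pos _).le
  have houter : |∑' n : ℤ, w n * constrainedGaussianAsymp k α (d + n) - A| ≤ δ * A := by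
    rw [tsum_congr hasymp, tsum_mul_left, show A = _ from constrainedGaussianAsymp_succ k hα d,
      ← mul_sub, abs_mul, abs_of_nonneg (sqrt_nonneg _), mul_left_comm]
    exact mul_le_mul_of_nonneg_left (abs_tsum_exp_neg_mul_sq_mul_exp_sub_le hα hα1
      (by linarith [k.cast_nonneg (α := ℝ)]) d) (sqrt_nonneg _)
  obtain ⟨hsum, htsum⟩ := tsum_constrainedGaussian_succ d (fun d => (hk d).1) hinner.1
  refine ⟨hsum, htsum ▸ ?_⟩
  calc _ ≤ η * ∑' n : ℤ, w n * constrainedGaussianAsymp k α (d + n) + δ * A :=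
        (abs_sub_le _ _ _).trans (add_le_add hinner.2 houter)
    _ ≤ η * ((1 + δ) * A) + δ * A := by gcongr; linarith [(abs_le.1 houter).2]
    _ = _ := by ring

theorem summable_and_abs_tsum_constrainedGaussian_sub_le {α : ℝ} (hα : 0 < α) (hα1 : α ≤ 1)
    (k : ℕ) (d : ℝ) :
    Summable (constrainedGaussian k α d) ∧
      |∑' q, constrainedGaussian k α d q - constrainedGaussianAsymp k α d|
        ≤ ((1 + thetaError α) ^ k - 1) * constrainedGaussianAsymp k α d := by
  induction k generalizing d with
  | zero =>
    refine ⟨(hasSum_fintype _).summable, ?_⟩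
    simp [tsum_fintype, constrainedGaussian, constrainedGaussianAsymp]
  | succ k ih =>
    have hη : 0 ≤ (1 + thetaError α) ^ k - 1 :=
      sub_nonneg.2 (one_le_pow₀ (le_add_of_nonneg_right (thetaError_nonneg α)))
    convert summable_and_abs_tsum_constrainedGaussian_succ_sub_le hα hα1 hη ih d using 3
    ring

lemma summable_constrainedGaussian (k : ℕ) {α : ℝ} (hα : 0 < α) (d : ℝ) :
    Summable (constrainedGaussian k α d) := by
  rcases le_total α 1 with h | h
  · exact (summable_and_abs_tsum_constrainedGaussian_sub_le hα h k d).1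
  · exact .of_nonneg_of_le (fun _ => (exp_pos _).le) (constrainedGaussian_anti k h d)
      (summable_and_abs_tsum_constrainedGaussian_sub_le one_pos le_rfl k d).1

lemma antitoneOn_tsum_constrainedGaussian (k : ℕ) (d : ℝ) :
    AntitoneOn (fun α => ∑' q, constrainedGaussian k α d q) (Ioi 0) := fun _ hβ _ hα hβα =>
  (summable_constrainedGaussian k hα d).tsum_le_tsum (constrainedGaussian_anti k hβα d)
    (summable_constrainedGaussian k hβ d)

lemma constrainedGaussianAsymp_four (α d : ℝ) :
    constrainedGaussianAsymp 4 α d = π ^ 2 / √5 * (α ^ 2)⁻¹ * rexp (-α * d ^ 2 / 5) := by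
  have hsqrt : √((π / α) ^ 4 / 5) = π ^ 2 / √5 * (α ^ 2)⁻¹ := by
    rw [sqrt_div' _ (by norm_num), show (π / α) ^ 4 = (π ^ 2 / α ^ 2) ^ 2 by ring,
      sqrt_sq_eq_abs, abs_of_nonneg (by positivity)]
    ring
  rw [constrainedGaussianAsymp, ← hsqrt]
  norm_num

lemma abs_tsum_constrainedGaussian_four_sub_le {α : ℝ} (hα : 0 < α) (hα1 : α ≤ 1) (d : ℝ) :
    |∑' q, constrainedGaussian 4 α d q - constrainedGaussianAsymp 4 α d| ≤ 15 * (π ^ 2 / √5) := by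
  have hδ := thetaError_le_sq hα
  have hδ0 := thetaError_nonneg α
  have hδ1 : thetaError α ≤ 1 := hδ.trans (pow_le_one₀ hα.le hα1)
  have hM : constrainedGaussianAsymp 4 α d ≤ π ^ 2 / √5 * (α ^ 2)⁻¹ := by
    rw [constrainedGaussianAsymp_four]
    refine mul_le_of_le_one_right (by positivity) (exp_le_one_iff.2 ?_)
    rw [neg_mul, neg_div]
    exact neg_nonpos.2 (by positivity)
  have hM0 : 0 ≤ constrainedGaussianAsymp 4 α d := by
    rw [constrainedGaussianAsymp]; positivity
  calc _ ≤ ((1 + thetaError α) ^ 4 - 1) * constrainedGaussianAsymp 4 α d :=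
        (summable_and_abs_tsum_constrainedGaussian_sub_le hα hα1 4 d).2
    _ ≤ (15 * α ^ 2) * (π ^ 2 / √5 * (α ^ 2)⁻¹) := by
        gcongr
        nlinarith [pow_le_one₀ (n := 2) hδ0 hδ1, pow_le_one₀ (n := 3) hδ0 hδ1]
    _ = 15 * (π ^ 2 / √5) := by field_simp

lemma abs_exp_neg_sub_one_add_le {x : ℝ} (hx : 0 ≤ x) : |rexp (-x) - 1 + x| ≤ x ^ 2 := by
  have hlow : 1 - x ≤ rexp (-x) := by linarith [add_one_le_exp (-x)]
  have hup : rexp (-x) ≤ (1 + x)⁻¹ := by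
    rw [exp_neg]; exact inv_anti₀ (by linarith) (by linarith [add_one_le_exp x])
  have hinv : (1 + x)⁻¹ - 1 + x ≤ x ^ 2 := by
    rw [inv_eq_one_div, div_sub_one (by linarith), div_add' _ _ _ (by linarith),
      div_le_iff₀ (by linarith)]
    nlinarith
  rw [abs_le]
  constructor <;> nlinarith

def schwingerIntegrand (m d α : ℝ) : ℝ :=
  rexp (-α * (m ^ 2 + d ^ 2)) * ∑' q, constrainedGaussian 4 α d q

lemma exp_mul_tsum_eq_schwingerIntegrand (m d α : ℝ) :
    rexp (-α * m ^ 2) * ∑' q : Fin 4 → ℤ,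
        rexp (-α * (d ^ 2 + ∑ i, (q i : ℝ) ^ 2 + (d + ∑ i, (q i : ℝ)) ^ 2)) =
      schwingerIntegrand m d α := by
  simp only [schwingerIntegrand, constrainedGaussian, ← tsum_mul_left, ← exp_add]
  ring_nf

lemma integrableOn_schwingerIntegrand {m : ℝ} (hm : 0 < m) (d : ℝ) {ε : ℝ} (hε : 0 < ε) :
    IntegrableOn (schwingerIntegrand m d) (Ioi ε) := by
  have hanti := antitoneOn_tsum_constrainedGaussian 4 d
  have hexp := exp_neg_integrableOn_Ioi ε (by positivity : 0 < m ^ 2 + d ^ 2)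
  refine Integrable.mono' (hexp.const_mul (∑' q, constrainedGaussian 4 ε d q)) ?_ ?_
  · exact ((measurable_id.neg.mul_const _).exp.aemeasurable.mul
      (aemeasurable_restrict_of_antitoneOn measurableSet_Ioi
        (hanti.mono (Ioi_subset_Ioi hε.le)))).aestronglyMeasurable
  · refine (ae_restrict_iff' measurableSet_Ioi).2 (.of_forall fun α hα => ?_)
    rw [schwingerIntegrand, norm_mul, norm_of_nonneg (exp_pos _).le,
      norm_of_nonneg (tsum_nonneg fun q => (exp_pos _).le : 0 ≤ ∑' q, constrainedGaussian 4 α d q),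
      mul_comm, neg_mul, neg_mul, mul_comm α]
    exact mul_le_mul_of_nonneg_right (hanti hε (hε.trans hα) hα.le) (exp_pos _).le

lemma abs_schwingerIntegrand_sub_le (m d : ℝ) {α : ℝ} (hα : 0 < α) (hα1 : α ≤ 1) :
    |schwingerIntegrand m d α - π ^ 2 / √5 * ((α ^ 2)⁻¹ - (m ^ 2 + 6 / 5 * d ^ 2) * α⁻¹)|
      ≤ π ^ 2 / √5 * (15 + (m ^ 2 + 6 / 5 * d ^ 2) ^ 2) := by
  set κ := π ^ 2 / √5
  set c := m ^ 2 + 6 / 5 * d ^ 2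
  set E := rexp (-α * (m ^ 2 + d ^ 2))
  set M := constrainedGaussianAsymp 4 α d
  have hE1 : E ≤ 1 := exp_le_one_iff.2 (by nlinarith [sq_nonneg m, sq_nonneg d])
  have hEM : E * M = κ * (α ^ 2)⁻¹ * rexp (-(c * α)) := by
    rw [show M = _ from constrainedGaussianAsymp_four α d, mul_left_comm, ← exp_add]
    simp only [κ, c]
    ring_nf
  have hc : 0 ≤ c * α := by positivity
  calc _ ≤ |E * (∑' q, constrainedGaussian 4 α d q) - E * M|
          + |E * M - κ * ((α ^ 2)⁻¹ - c * α⁻¹)| := abs_sub_le _ _ _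
    _ = E * |∑' q, constrainedGaussian 4 α d q - M|
          + κ * (α ^ 2)⁻¹ * |rexp (-(c * α)) - 1 + c * α| := by
        have hsplit : κ * (α ^ 2)⁻¹ * rexp (-(c * α)) - κ * ((α ^ 2)⁻¹ - c * α⁻¹) =
            κ * (α ^ 2)⁻¹ * (rexp (-(c * α)) - 1 + c * α) := by field_simp; ring
        rw [← mul_sub, abs_mul, abs_of_pos (exp_pos _), hEM, hsplit, abs_mul,
          abs_of_nonneg (by positivity : 0 ≤ κ * (α ^ 2)⁻¹)]
    _ ≤ 1 * (15 * κ) + κ * (α ^ 2)⁻¹ * (c * α) ^ 2 := by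
        gcongr
        · exact abs_tsum_constrainedGaussian_four_sub_le hα hα1 d
        · exact abs_exp_neg_sub_one_add_le hc
    _ = κ * (15 + c ^ 2) := by field_simp

lemma intervalIntegrable_inv_sq_sub_mul_inv (c : ℝ) {ε : ℝ} (hε : 0 < ε) :
    IntervalIntegrable (fun α : ℝ => (α ^ 2)⁻¹ - c * α⁻¹) volume ε 1 := by
  have hne : ∀ x ∈ uIcc ε 1, x ≠ 0 := fun x hx => ((lt_min hε one_pos).trans_le hx.1).ne'
  exact ContinuousOn.intervalIntegrable (((continuousOn_pow 2).inv₀ fun x hx =>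
    pow_ne_zero 2 (hne x hx)).sub (continuousOn_const.mul (continuousOn_id.inv₀ hne)))

lemma integral_inv_sq_sub_mul_inv (c : ℝ) {ε : ℝ} (hε : 0 < ε) :
    ∫ α in ε..1, ((α ^ 2)⁻¹ - c * α⁻¹) = ε⁻¹ - 1 + c * log ε := by
  have hderiv : ∀ x ∈ uIcc ε 1,
      HasDerivAt (fun x => -x⁻¹ - c * log x) ((x ^ 2)⁻¹ - c * x⁻¹) x := fun x hx => by
    have hx0 : x ≠ 0 := ((lt_min hε one_pos).trans_le hx.1).ne'
    have h := (hasDerivAt_inv hx0).neg.sub ((hasDerivAt_log hx0).const_mul c)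
    rwa [neg_neg] at h
  rw [intervalIntegral.integral_eq_sub_of_hasDerivAt hderiv
    (intervalIntegrable_inv_sq_sub_mul_inv c hε)]
  simp only [inv_one, log_one]
  ring

lemma abs_integral_Ioi_sub_le {F : ℝ → ℝ} {A c B ε : ℝ} (hε : 0 < ε) (hε1 : ε ≤ 1)
    (hF : IntegrableOn F (Ioi ε))
    (hFB : ∀ α ∈ Ioc 0 1, |F α - A * ((α ^ 2)⁻¹ - c * α⁻¹)| ≤ B) :
    |(∫ α in Ioi ε, F α) - A * (ε⁻¹ + c * log ε)| ≤ B + |A| + |∫ α in Ioi 1, F α| := by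
  have hB : 0 ≤ B := (abs_nonneg _).trans (hFB 1 ⟨one_pos, le_rfl⟩)
  have hmain := (intervalIntegrable_inv_sq_sub_mul_inv c hε).const_mul A
  have hsplit : ∫ α in Ioi ε, F α = (∫ α in Ioc ε 1, F α) + ∫ α in Ioi 1, F α := by
    rw [← setIntegral_union (Ioc_disjoint_Ioi le_rfl) measurableSet_Ioi
      (hF.mono_set Ioc_subset_Ioi_self) (hF.mono_set (Ioi_subset_Ioi hε1)),
      Ioc_union_Ioi_eq_Ioi hε1]
  have hnear : |(∫ α in Ioc ε 1, F α) - A * (ε⁻¹ - 1 + c * log ε)| ≤ B := by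
    rw [← integral_inv_sq_sub_mul_inv c hε, ← intervalIntegral.integral_const_mul,
      intervalIntegral.integral_of_le hε1, ← integral_sub (hF.mono_set Ioc_subset_Ioi_self)
      (hmain.1), ← Real.norm_eq_abs]
    refine (norm_setIntegral_le_of_norm_le_const (by simp) fun α hα =>
      hFB α ⟨hε.trans hα.1, hα.2⟩).trans ?_
    rw [Real.volume_real_Ioc_of_le hε1]
    nlinarith
  calc _ = |((∫ α in Ioc ε 1, F α) - A * (ε⁻¹ - 1 + c * log ε)) + -A + ∫ α in Ioi 1, F α| := by
        rw [hsplit]; ring_nf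
    _ ≤ _ := by
        refine (abs_add_three _ _ _).trans ?_
        rw [abs_neg]
        linarith

end

/-- Asymptotic expansion, in the Schwinger-parametric cutoff `Λ`, of the one-loop melonic
self-energy of the rank-6 quartic U(1) TGFT with closure constraint:
`∫_{1/Λ²}^∞ e^{-αm²} (∑_{q∈ℤ⁴} e^{-α(p² + |q|² + (p+S(q))²)}) dα
  = (π²/√5)(Λ² - 2(m² + (6/5)p²) log Λ) + O(1)`. -/
theorem one_loop_self_energy_asymptotics (m : ℝ) (hm : 0 < m) (p : ℤ) :
    ∃ C : ℝ, 0 < C ∧ ∀ Λ : ℝ, 2 ≤ Λ →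
      |(∫ α in Set.Ioi (1 / Λ ^ 2),
          Real.exp (-α * m ^ 2) *
            (∑' q : Fin 4 → ℤ,
              Real.exp (-α * ((p : ℝ) ^ 2 + (∑ i, (q i : ℝ) ^ 2)
                + ((p : ℝ) + ∑ i, (q i : ℝ)) ^ 2))))
        - (Real.pi ^ 2 / Real.sqrt 5) *
            (Λ ^ 2 - 2 * (m ^ 2 + (6 / 5) * (p : ℝ) ^ 2) * Real.log Λ)| ≤ C := by
  refine ⟨π ^ 2 / √5 * (15 + (m ^ 2 + 6 / 5 * (p : ℝ) ^ 2) ^ 2) + |π ^ 2 / √5|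
    + |∫ α in Ioi 1, schwingerIntegrand m p α|, by positivity, fun Λ hΛ => ?_⟩
  have hε : 0 < 1 / Λ ^ 2 := by positivity
  have hε1 : 1 / Λ ^ 2 ≤ 1 := by rw [div_le_one (by positivity)]; nlinarith
  have key := abs_integral_Ioi_sub_le hε hε1 (integrableOn_schwingerIntegrand hm p hε)
    fun α hα => abs_schwingerIntegrand_sub_le m p hα.1 hα.2
  simp_rw [exp_mul_tsum_eq_schwingerIntegrand]
  convert key using 3
  rw [one_div, inv_inv, log_inv, log_pow]
  push_cast
  ring
end

section
/- Let m > 0 be a real number. There exist constants K₁ > 0 and K₂ > 0 such that for every natural number n ≥ 1: K₁^{n+1} · n! ≤ ∑_{p=2}^{∞} (log p)ⁿ / (p² + m²) ≤ K₂^{n+1} · n!. (The sum over the strand momentum p of the nth power of a logarithm times a propagator grows factorially in n; this is the renormalon effect produced by inserting a chain of n renormalized melonic two-point insertions, each behaving like log p at large p, on a propagator line.) -/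
open Real

private lemma pow_le_factorial_mul_exp {y : ℝ} (hy : 0 ≤ y) (n : ℕ) :
    y ^ n ≤ n.factorial * Real.exp y := by
  have h1 : y ^ n / n.factorial ≤ Real.exp y := by
    calc y ^ n / n.factorial
        ≤ ∑ i ∈ Finset.range (n + 1), y ^ i / i.factorial := by
          refine Finset.single_le_sum (f := fun i => y ^ i / (i.factorial : ℝ))
            (fun i _ => by positivity) (Finset.self_mem_range_succ n)
      _ ≤ Real.exp y := Real.sum_le_exp_of_nonneg hy _
  have hfac : (0 : ℝ) < n.factorial := by positivity
  calc y ^ n = (y ^ n / n.factorial) * n.factorial := by field_simp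
    _ ≤ Real.exp y * n.factorial := by
        exact mul_le_mul_of_nonneg_right h1 hfac.le
    _ = n.factorial * Real.exp y := mul_comm _ _

/-- key upper bound on one term -/
private lemma log_pow_le {x : ℝ} (hx : 1 ≤ x) (n : ℕ) :
    (Real.log x) ^ n ≤ 2 ^ n * n.factorial * x ^ ((1:ℝ)/2) := by
  have hx0 : 0 < x := lt_of_lt_of_le zero_lt_one hx
  have hl : 0 ≤ Real.log x := Real.log_nonneg hx
  have hy : 0 ≤ Real.log x / 2 := by linarith
  have h := pow_le_factorial_mul_exp hy n
  have hexp : Real.exp (Real.log x / 2) = x ^ ((1:ℝ)/2) := by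
    rw [Real.rpow_def_of_pos hx0]
    ring_nf
  have h2 : (Real.log x) ^ n = 2 ^ n * (Real.log x / 2) ^ n := by
    rw [div_pow, mul_div_cancel₀]
    positivity
  rw [h2]
  calc 2 ^ n * (Real.log x / 2) ^ n
      ≤ 2 ^ n * (n.factorial * Real.exp (Real.log x / 2)) := by
        exact mul_le_mul_of_nonneg_left h (by positivity)
    _ = 2 ^ n * n.factorial * x ^ ((1:ℝ)/2) := by rw [hexp]; ring

/-- Renormalon effect: the sum over the strand momentum `p ≥ 2` of the `n`-th power of a
logarithm times a propagator grows factorially in `n` (here `p` runs over integers `≥ 2`,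
parametrized as `p + 2` with `p : ℕ`). -/
theorem renormalon_factorial_growth (m : ℝ) (hm : 0 < m) :
    ∃ K₁ K₂ : ℝ, 0 < K₁ ∧ 0 < K₂ ∧ ∀ n : ℕ, 1 ≤ n →
      Summable (fun p : ℕ =>
        (Real.log ((p : ℝ) + 2)) ^ n / (((p : ℝ) + 2) ^ 2 + m ^ 2)) ∧
      K₁ ^ (n + 1) * (n.factorial : ℝ) ≤
        (∑' p : ℕ, (Real.log ((p : ℝ) + 2)) ^ n / (((p : ℝ) + 2) ^ 2 + m ^ 2)) ∧
      (∑' p : ℕ, (Real.log ((p : ℝ) + 2)) ^ n / (((p : ℝ) + 2) ^ 2 + m ^ 2)) ≤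
        K₂ ^ (n + 1) * (n.factorial : ℝ) := by
  -- the comparison series
  have hgsum : Summable (fun p : ℕ => 1 / ((p : ℝ) + 2) ^ ((3:ℝ)/2)) := by
    have h0 : Summable (fun p : ℕ => 1 / (p : ℝ) ^ ((3:ℝ)/2)) :=
      Real.summable_one_div_nat_rpow.2 (by norm_num)
    have := (summable_nat_add_iff 2).2 h0
    refine this.congr fun p => ?_
    push_cast
    ring_nf
  set C := ∑' p : ℕ, 1 / ((p : ℝ) + 2) ^ ((3:ℝ)/2) with hCdef
  have hCpos : 0 < C := by
    refine Summable.tsum_pos hgsum (fun p => by positivity) 0 ?_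
    positivity
  refine ⟨min (1 / (4 + m ^ 2)) (Real.exp (-2)), max 2 C,
    lt_min (by positivity) (Real.exp_pos _), lt_of_lt_of_le two_pos (le_max_left _ _),
    fun n hn => ?_⟩
  set K₁ := min (1 / (4 + m ^ 2)) (Real.exp (-2)) with hK₁
  set K₂ := max 2 C with hK₂
  have hK₁pos : 0 < K₁ := lt_min (by positivity) (Real.exp_pos _)
  -- pointwise upper bound
  have hpt : ∀ p : ℕ, (Real.log ((p : ℝ) + 2)) ^ n / (((p : ℝ) + 2) ^ 2 + m ^ 2)
      ≤ 2 ^ n * n.factorial * (1 / ((p : ℝ) + 2) ^ ((3:ℝ)/2)) := by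
    intro p
    set x : ℝ := (p : ℝ) + 2 with hx
    have hx1 : (1:ℝ) ≤ x := by have := p.cast_nonneg (α := ℝ); linarith
    have hx0 : (0:ℝ) < x := by positivity
    have h1 : (Real.log x) ^ n ≤ 2 ^ n * n.factorial * x ^ ((1:ℝ)/2) := log_pow_le hx1 n
    have hden : (0:ℝ) < x ^ 2 + m ^ 2 := by positivity
    have h2 : x ^ ((1:ℝ)/2) / (x ^ 2 + m ^ 2) ≤ 1 / x ^ ((3:ℝ)/2) := by
      rw [div_le_div_iff₀ hden (by positivity)]
      have : x ^ ((1:ℝ)/2) * x ^ ((3:ℝ)/2) = x ^ 2 := by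
        rw [← Real.rpow_natCast x 2, ← Real.rpow_add hx0]
        norm_num
      rw [mul_comm] at this ⊢
      rw [this]
      nlinarith [sq_nonneg m]
    calc (Real.log x) ^ n / (x ^ 2 + m ^ 2)
        ≤ (2 ^ n * n.factorial * x ^ ((1:ℝ)/2)) / (x ^ 2 + m ^ 2) := by
          gcongr
      _ = 2 ^ n * n.factorial * (x ^ ((1:ℝ)/2) / (x ^ 2 + m ^ 2)) := by ring
      _ ≤ 2 ^ n * n.factorial * (1 / x ^ ((3:ℝ)/2)) := by
          exact mul_le_mul_of_nonneg_left h2 (by positivity)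
  have hnonneg : ∀ p : ℕ, 0 ≤ (Real.log ((p : ℝ) + 2)) ^ n / (((p : ℝ) + 2) ^ 2 + m ^ 2) := by
    intro p
    have : (0:ℝ) ≤ Real.log ((p:ℝ) + 2) := Real.log_nonneg (by
      have := p.cast_nonneg (α := ℝ); linarith)
    positivity
  have hsum : Summable (fun p : ℕ =>
      (Real.log ((p : ℝ) + 2)) ^ n / (((p : ℝ) + 2) ^ 2 + m ^ 2)) := by
    refine Summable.of_nonneg_of_le hnonneg hpt ?_
    exact hgsum.mul_left _
  refine ⟨hsum, ?_, ?_⟩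
  · -- lower bound
    -- pick N = ⌈exp n⌉₊, p₀ = N - 2
    set N : ℕ := Nat.ceil (Real.exp n) with hN
    have hexp1 : (1:ℝ) ≤ Real.exp n := Real.one_le_exp (Nat.cast_nonneg n)
    have hexpn2 : (2:ℝ) ≤ Real.exp n := by
      have : (2:ℝ) ≤ Real.exp 1 := by
        have := Real.add_one_le_exp (1:ℝ); linarith
      calc (2:ℝ) ≤ Real.exp 1 := this
        _ ≤ Real.exp n := Real.exp_le_exp.2 (by exact_mod_cast hn)
    have hN2 : 2 ≤ N := by
      have : (2:ℝ) ≤ N := le_trans hexpn2 (Nat.le_ceil _)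
      exact_mod_cast this
    set p₀ : ℕ := N - 2 with hp₀
    have hNp : ((p₀ : ℝ) + 2) = (N : ℝ) := by
      have : p₀ + 2 = N := Nat.sub_add_cancel hN2
      exact_mod_cast this
    have hNge : Real.exp n ≤ (N : ℝ) := Nat.le_ceil _
    have hNle : (N : ℝ) ≤ 2 * Real.exp n := by
      have h := Nat.ceil_lt_add_one (le_of_lt (Real.exp_pos (n:ℝ)))
      have h' : (N : ℝ) < Real.exp (n:ℝ) + 1 := h
      linarith
    have hlogN : (n : ℝ) ≤ Real.log N := by
      rw [← Real.log_exp (n : ℝ)]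
      exact Real.log_le_log (Real.exp_pos _) hNge
    have hterm : K₁ ^ (n + 1) * (n.factorial : ℝ) ≤
        (Real.log ((p₀ : ℝ) + 2)) ^ n / (((p₀ : ℝ) + 2) ^ 2 + m ^ 2) := by
      rw [hNp]
      have hnum : (n.factorial : ℝ) ≤ (Real.log N) ^ n := by
        calc (n.factorial : ℝ) ≤ (n : ℝ) ^ n := by
              exact_mod_cast Nat.factorial_le_pow n
          _ ≤ (Real.log N) ^ n := by
              exact pow_le_pow_left₀ (by positivity) hlogN n
      have hden : ((N : ℝ) ^ 2 + m ^ 2) ≤ (4 + m ^ 2) * Real.exp n ^ 2 := by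
        have h1 : (N : ℝ) ^ 2 ≤ 4 * Real.exp n ^ 2 := by nlinarith [Real.exp_pos (n:ℝ)]
        have he2 : 1 ≤ Real.exp (n:ℝ) ^ 2 := by nlinarith
        have h2 : m ^ 2 ≤ m ^ 2 * Real.exp n ^ 2 := by nlinarith [sq_nonneg m, he2]
        nlinarith
      have hK₁le : K₁ ^ (n + 1) ≤ (1 / (4 + m ^ 2)) * Real.exp (-2) ^ n := by
        rw [pow_succ']
        refine mul_le_mul (min_le_left _ _) ?_ (by positivity) (by positivity)
        exact pow_le_pow_left₀ hK₁pos.le (min_le_right _ _) n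
      have hexpneg : Real.exp (-2) ^ n = 1 / Real.exp (n:ℝ) ^ 2 := by
        rw [← Real.exp_nat_mul, ← Real.exp_nat_mul, eq_div_iff (by positivity),
          ← Real.exp_add, show (n:ℝ) * (-2) + (2:ℕ) * (n:ℝ) = 0 by push_cast; ring,
          Real.exp_zero]
      have hlog0 : (0:ℝ) ≤ Real.log N ^ n :=
        pow_nonneg (le_trans (Nat.cast_nonneg n) hlogN) n
      have hA : K₁ ^ (n+1) * (n.factorial:ℝ) ≤
          (n.factorial:ℝ) / ((4 + m ^ 2) * Real.exp (n:ℝ) ^ 2) := by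
        have heq : (1/(4 + m ^ 2)) * Real.exp (-2) ^ n =
            1 / ((4 + m ^ 2) * Real.exp (n:ℝ) ^ 2) := by
          rw [hexpneg]; field_simp
        calc K₁ ^ (n+1) * (n.factorial:ℝ)
            ≤ (1/(4 + m ^ 2)) * Real.exp (-2) ^ n * n.factorial :=
              mul_le_mul_of_nonneg_right hK₁le (by positivity)
          _ = (n.factorial:ℝ) / ((4 + m ^ 2) * Real.exp (n:ℝ) ^ 2) := by
              rw [heq]; ring
      have hB : (n.factorial:ℝ) / ((4 + m ^ 2) * Real.exp (n:ℝ) ^ 2) ≤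
          Real.log N ^ n / ((N:ℝ) ^ 2 + m ^ 2) :=
        div_le_div₀ hlog0 hnum (by positivity) hden
      linarith
    have := Summable.le_tsum hsum p₀ (fun j _ => hnonneg j)
    linarith
  · -- upper bound
    have htsle : (∑' p : ℕ, (Real.log ((p : ℝ) + 2)) ^ n / (((p : ℝ) + 2) ^ 2 + m ^ 2))
        ≤ 2 ^ n * n.factorial * C := by
      calc (∑' p : ℕ, (Real.log ((p : ℝ) + 2)) ^ n / (((p : ℝ) + 2) ^ 2 + m ^ 2))
          ≤ ∑' p : ℕ, 2 ^ n * n.factorial * (1 / ((p : ℝ) + 2) ^ ((3:ℝ)/2)) :=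
            Summable.tsum_le_tsum hpt hsum (hgsum.mul_left _)
        _ = 2 ^ n * n.factorial * C := by rw [tsum_mul_left]
    refine le_trans htsle ?_
    have hK2C : C ≤ K₂ := le_max_right _ _
    have hK22 : (2:ℝ) ≤ K₂ := le_max_left _ _
    have : 2 ^ n * C ≤ K₂ ^ (n + 1) := by
      rw [pow_succ]
      exact mul_le_mul (pow_le_pow_left₀ (by norm_num) hK22 n) hK2C hCpos.le (by positivity)
    calc 2 ^ n * (n.factorial : ℝ) * C = 2 ^ n * C * n.factorial := by ring
      _ ≤ K₂ ^ (n + 1) * n.factorial := by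
          exact mul_le_mul_of_nonneg_right this (by positivity)
end

section
/- Let M > 1 be a real number, let V be a nonempty finite type, let G be a simple graph on V which is a tree (connected and acyclic), and let r ∈ V. Then the family, indexed by functions i : V → ℕ with i(r) = 0, of products ∏_{{u,v} ∈ E(G)} M^{−|i(u) − i(v)|} over the edges of G, is summable, and its sum is at most ((M+1)/(M−1))^{card V − 1}. (This is the key combinatorial estimate used to bound the sum over multiscale attributions μ of the vertex scales in the proof of the uniform Weinberg theorem: exponential decay in scale differences along the edges of a spanning tree makes the sum over all scale assignments grow at most exponentially in the number of vertices.) -/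
open scoped BigOperators

/-- The weight `M^{-|i(u)-i(v)|}` attached to an (unordered) edge `{u,v}` of a graph,
for a scale attribution `i` on the vertices; well defined on `Sym2 V` since the exponent
is symmetric in `u, v`. -/
noncomputable def edgeWeight (M : ℝ) {V : Type} (i : V → ℕ) : Sym2 V → ℝ :=
  Sym2.lift ⟨fun u v => M ^ (-|(i u : ℤ) - (i v : ℤ)|),
    fun u v => by simp only []; rw [abs_sub_comm]⟩

/-!
Record a rooted attribution `i` by its differences `i u - i v` along the (arbitrarily oriented)
edges. Since the tree is connected and `i r = 0`, this map into `ℤ^{E(G)}` is injective, so every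
finite partial sum is bounded by a sum over a box in `ℤ^{E(G)}`, which factorizes into a product
of `|E(G)| = |V| - 1` partial sums of the two-sided geometric series
`∑_{d ∈ ℤ} M^{-|d|} = (M + 1) / (M - 1)`.
-/

open Finset Function

theorem hasSum_zpow_neg_abs {M : ℝ} (hM : 1 < M) :
    HasSum (fun d : ℤ => M ^ (-|d|)) ((M + 1) / (M - 1)) := by
  have hq₀ : 0 ≤ M⁻¹ := by positivity
  have hq₁ : M⁻¹ < 1 := inv_lt_one_of_one_lt₀ hM
  have hnonneg : HasSum (fun n : ℕ => M ^ (-|(n : ℤ)|)) (1 - M⁻¹)⁻¹ := by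
    simpa [zpow_neg, inv_pow] using hasSum_geometric_of_lt_one hq₀ hq₁
  have hneg : HasSum (fun n : ℕ => M ^ (-|-((n : ℤ) + 1)|)) (M⁻¹ * (1 - M⁻¹)⁻¹) := by
    have hterm (n : ℕ) : M ^ (-|-((n : ℤ) + 1)|) = M⁻¹ * M⁻¹ ^ n := by
      rw [abs_neg, ← Nat.cast_succ, Int.abs_natCast, zpow_neg, zpow_natCast, ← inv_pow, pow_succ']
    simpa only [hterm] using (hasSum_geometric_of_lt_one hq₀ hq₁).mul_left M⁻¹
  have hM₀ : M ≠ 0 := by positivity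
  have hM₁ : M - 1 ≠ 0 := sub_ne_zero.mpr hM.ne'
  convert HasSum.of_nat_of_neg_add_one (f := fun d : ℤ => M ^ (-|d|)) hnonneg hneg using 1
  field_simp

theorem sum_prod_le_pow_of_sum_le {ι κ : Type*} [Fintype ι] [DecidableEq ι] [DecidableEq κ]
    {w : κ → ℝ} {C : ℝ} (hw : 0 ≤ w) (hC : ∀ s : Finset κ, ∑ d ∈ s, w d ≤ C)
    (T : Finset (ι → κ)) : ∑ g ∈ T, ∏ e, w (g e) ≤ C ^ Fintype.card ι := by
  set t : ι → Finset κ := fun e => T.image (· e)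
  have hT : T ⊆ Fintype.piFinset t := fun g hg =>
    Fintype.mem_piFinset.mpr fun e => mem_image_of_mem (· e) hg
  calc ∑ g ∈ T, ∏ e, w (g e)
      ≤ ∑ g ∈ Fintype.piFinset t, ∏ e, w (g e) :=
        sum_le_sum_of_subset_of_nonneg hT fun g _ _ => prod_nonneg fun e _ => hw _
    _ = ∏ e, ∑ d ∈ t e, w d := (prod_univ_sum t fun _ d => w d).symm
    _ ≤ ∏ _e : ι, C := prod_le_prod (fun e _ => sum_nonneg fun d _ => hw d) fun e _ => hC _
    _ = C ^ Fintype.card ι := by rw [prod_const, card_univ]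

theorem summable_prod_comp_injective_and_tsum_le {α ι κ : Type*} [Fintype ι]
    {w : κ → ℝ} {C : ℝ} (hw : 0 ≤ w) (hC : ∀ s : Finset κ, ∑ d ∈ s, w d ≤ C)
    {φ : α → ι → κ} (hφ : Injective φ) :
    Summable (fun a => ∏ e, w (φ a e)) ∧ ∑' a, ∏ e, w (φ a e) ≤ C ^ Fintype.card ι := by
  classical
  have hnonneg : 0 ≤ fun a => ∏ e, w (φ a e) := fun a => prod_nonneg fun e _ => hw _
  have hsum (S : Finset α) : ∑ a ∈ S, ∏ e, w (φ a e) ≤ C ^ Fintype.card ι := by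
    rw [← sum_image (f := fun g : ι → κ => ∏ e, w (g e)) fun a _ b _ h => hφ h]
    exact sum_prod_le_pow_of_sum_le hw hC _
  exact ⟨summable_of_sum_le hnonneg hsum, Real.tsum_le_of_sum_le hnonneg hsum⟩

theorem SimpleGraph.Preconnected.eq_of_forall_adj {V α : Type*} {G : SimpleGraph V}
    (hG : G.Preconnected) {f : V → α} (hf : ∀ u v, G.Adj u v → f u = f v) (u v : V) :
    f u = f v := by
  obtain ⟨p⟩ := hG u v
  induction p with
  | nil => rfl
  | cons hadj _ ih => exact (hf _ _ hadj).trans ih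

variable {V : Type}

noncomputable def edgeDiff (i : V → ℕ) (e : Sym2 V) : ℤ := i e.out.1 - i e.out.2

theorem edgeWeight_eq_zpow_edgeDiff (M : ℝ) (i : V → ℕ) (e : Sym2 V) :
    edgeWeight M i e = M ^ (-|edgeDiff i e|) := by
  nth_rewrite 1 [← Quot.out_eq e]
  rfl

theorem sub_eq_sub_of_edgeDiff_eq {i i' : V → ℕ} {u v : V}
    (h : edgeDiff i s(u, v) = edgeDiff i' s(u, v)) : (i u : ℤ) - i v = i' u - i' v := by
  have hout : s((s(u, v)).out.1, (s(u, v)).out.2) = s(u, v) := Quot.out_eq _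
  unfold edgeDiff at h
  rcases Sym2.eq_iff.mp hout with ⟨h₁, h₂⟩ | ⟨h₁, h₂⟩ <;> rw [h₁, h₂] at h <;> omega

theorem edgeDiff_injective [Fintype V] [DecidableEq V] {G : SimpleGraph V} [DecidableRel G.Adj]
    (hG : G.Preconnected) (r : V) :
    Injective fun (i : {i : V → ℕ // i r = 0}) (e : G.edgeFinset) => edgeDiff i.1 e := by
  rintro ⟨i, hi⟩ ⟨i', hi'⟩ h
  dsimp only at h
  have hadj (u v : V) (huv : G.Adj u v) : (i u : ℤ) - i' u = i v - i' v := by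
    have := sub_eq_sub_of_edgeDiff_eq (congrFun h ⟨s(u, v), G.mem_edgeFinset.mpr huv⟩)
    omega
  ext v
  dsimp only
  have := hG.eq_of_forall_adj hadj v r
  simp only [hi, hi'] at this
  omega

theorem multiscale_tree_sum_bound_general (M : ℝ) (hM : 1 < M) (V : Type) [Fintype V]
    [DecidableEq V] (G : SimpleGraph V) [DecidableRel G.Adj] (hG : G.IsTree) (r : V) :
    Summable (fun i : {i : V → ℕ // i r = 0} =>
      ∏ e ∈ G.edgeFinset, edgeWeight M i.1 e) ∧
    (∑' i : {i : V → ℕ // i r = 0}, ∏ e ∈ G.edgeFinset, edgeWeight M i.1 e) ≤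
      ((M + 1) / (M - 1)) ^ (Fintype.card V - 1) := by
  have hw : 0 ≤ fun d : ℤ => M ^ (-|d|) := fun d => zpow_nonneg (by linarith) _
  have hC (s : Finset ℤ) : ∑ d ∈ s, M ^ (-|d|) ≤ (M + 1) / (M - 1) :=
    sum_le_hasSum s (fun d _ => hw d) (hasSum_zpow_neg_abs hM)
  have hcard : Fintype.card G.edgeFinset = Fintype.card V - 1 := by
    rw [Fintype.card_coe, ← hG.card_edgeFinset, Nat.add_sub_cancel]
  simp only [← prod_coe_sort G.edgeFinset, edgeWeight_eq_zpow_edgeDiff, ← hcard]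
  exact summable_prod_comp_injective_and_tsum_le hw hC
    (edgeDiff_injective hG.connected.preconnected r)

/-- Key combinatorial estimate for the sum over multiscale attributions: for a tree `G` on a
finite vertex set `V` with a root `r`, the sum over all scale attributions `i : V → ℕ` with
`i r = 0` of the product over the edges of `M^{-|i(u)-i(v)|}` is summable and bounded by
`((M+1)/(M-1))^{|V|-1}`. -/
theorem multiscale_tree_sum_bound (M : ℝ) (hM : 1 < M) (V : Type) [Fintype V] [Nonempty V]
    [DecidableEq V] (G : SimpleGraph V) [DecidableRel G.Adj] (hG : G.IsTree) (r : V) :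
    Summable (fun i : {i : V → ℕ // i r = 0} =>
      ∏ e ∈ G.edgeFinset, edgeWeight M i.1 e) ∧
    (∑' i : {i : V → ℕ // i r = 0}, ∏ e ∈ G.edgeFinset, edgeWeight M i.1 e) ≤
      ((M + 1) / (M - 1)) ^ (Fintype.card V - 1) :=
  multiscale_tree_sum_bound_general M hM V G hG r
end
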